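/- arXiv:2312.00156 — 2 statements merged into one kernel-verified Lean document; each statement's English description precedes it below -/
import Mathlib

section
/- Let ℋ be a simplicial cocommutative color Hopf algebra, let γ = d¹₁ and i = s¹₀, and let k ∈ Hker(d¹₀) ⊆ H₁ (viewed via a splitting). Then the element S(k₁) i(γ(k₂)) lies in Hker(γ); that is, (Id ⊗ γ)Δ(S(k₁) i(γ(k₂))) = S(k₁) i(γ(k₂)) ⊗ 1. -/
open TensorProduct

namespace ColorHopfPaper

variable (k : Type*) [Field k] (G : Type*) [CommGroup G]

/-- The "middle interchange" map `(A⊗A)⊗(B⊗B) → (A⊗B)⊗(A⊗B)` built from a braiding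
`c : A⊗B → B⊗A` applied to the two middle factors. -/
noncomputable def midMap {A B : Type*} [AddCommGroup A] [Module k A]
    [AddCommGroup B] [Module k B] (c : A ⊗[k] B →ₗ[k] B ⊗[k] A) :
    (A ⊗[k] A) ⊗[k] (B ⊗[k] B) →ₗ[k] (A ⊗[k] B) ⊗[k] (A ⊗[k] B) :=
  (TensorProduct.assoc k A B (A ⊗[k] B)).symm.toLinearMap ∘ₗ
    (TensorProduct.map LinearMap.id
      ((TensorProduct.assoc k B A B).toLinearMap ∘ₗ
        (TensorProduct.map c LinearMap.id) ∘ₗ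
        (TensorProduct.assoc k A B B).symm.toLinearMap)) ∘ₗ
    (TensorProduct.assoc k A A (B ⊗[k] B)).toLinearMap


/-- Generic Hopf kernel `{x : x₁ ⊗ f(x₂) = x ⊗ 1}` of `f`, for a comultiplication `Δ`. -/
noncomputable def hkerGen {X B : Type*} [AddCommGroup X] [Module k X]
    [AddCommGroup B] [Module k B]
    (Δ : X →ₗ[k] X ⊗[k] X) (f : X →ₗ[k] B) (oneB : B) : Submodule k X :=
  LinearMap.ker (((TensorProduct.map LinearMap.id f) ∘ₗ Δ) -
    (TensorProduct.mk k X B).flip oneB)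

/-- A (cocommutative) color Hopf algebra: a cocommutative Hopf monoid in the symmetric
monoidal category of `G`-graded `k`-vector spaces, with braiding given by a
skew-symmetric bicharacter `φ`. -/
structure ColorHopfAlg (H : Type*) [AddCommGroup H] [Module k H] where
  φ : G → G → k
  φ_ne : ∀ g h : G, φ g h ≠ 0
  φ_mul_left : ∀ g h l : G, φ (g * h) l = φ g l * φ h l
  φ_mul_right : ∀ g h l : G, φ g (h * l) = φ g h * φ g l
  φ_skew : ∀ g h : G, φ g h * φ h g = 1
  grade : G → Submodule k H
  grade_top : ⨆ g : G, grade g = ⊤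
  mul : H ⊗[k] H →ₗ[k] H
  one : H
  comul : H →ₗ[k] H ⊗[k] H
  counit : H →ₗ[k] k
  antipode : H →ₗ[k] H
  braid : H ⊗[k] H →ₗ[k] H ⊗[k] H
  braid_apply : ∀ (g h : G) (x y : H), x ∈ grade g → y ∈ grade h →
    braid (x ⊗ₜ[k] y) = φ g h • (y ⊗ₜ[k] x)
  one_mem : one ∈ grade 1
  mul_mem : ∀ (g h : G) (x y : H), x ∈ grade g → y ∈ grade h →
    mul (x ⊗ₜ[k] y) ∈ grade (g * h)
  antipode_mem : ∀ (g : G) (x : H), x ∈ grade g → antipode x ∈ grade g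
  mul_assoc' : ∀ x y z : H,
    mul (mul (x ⊗ₜ[k] y) ⊗ₜ[k] z) = mul (x ⊗ₜ[k] mul (y ⊗ₜ[k] z))
  one_mul' : ∀ x : H, mul (one ⊗ₜ[k] x) = x
  mul_one' : ∀ x : H, mul (x ⊗ₜ[k] one) = x
  coassoc : (TensorProduct.assoc k H H H).toLinearMap ∘ₗ
      (TensorProduct.map comul LinearMap.id) ∘ₗ comul
      = (TensorProduct.map LinearMap.id comul) ∘ₗ comul
  counit_left : ∀ x : H,
    (TensorProduct.lid k H) ((TensorProduct.map counit LinearMap.id) (comul x)) = x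
  counit_right : ∀ x : H,
    (TensorProduct.rid k H) ((TensorProduct.map LinearMap.id counit) (comul x)) = x
  comul_one : comul one = one ⊗ₜ[k] one
  counit_one : counit one = 1
  counit_mul : ∀ x y : H, counit (mul (x ⊗ₜ[k] y)) = counit x * counit y
  comul_mul : comul ∘ₗ mul =
    (TensorProduct.map mul mul) ∘ₗ midMap k braid ∘ₗ (TensorProduct.map comul comul)
  cocomm : braid ∘ₗ comul = comul
  antipode_left : ∀ x : H,
    mul ((TensorProduct.map antipode LinearMap.id) (comul x)) = counit x • one
  antipode_right : ∀ x : H,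
    mul ((TensorProduct.map LinearMap.id antipode) (comul x)) = counit x • one

namespace ColorHopfAlg

variable {k G}
variable {H : Type*} [AddCommGroup H] [Module k H] (C : ColorHopfAlg k G H)

/-- An element is homogeneous if it lies in one of the graded components. -/
def homogeneous (x : H) : Prop := ∃ g : G, x ∈ C.grade g

/-- The (color) adjoint action `ξ(a ⊗ b) = φ(|a₂|,|b|) a₁ b S(a₂)`. -/
noncomputable def adj : H ⊗[k] H →ₗ[k] H :=
  C.mul ∘ₗ
    (TensorProduct.map LinearMap.id
      (C.mul ∘ₗ (TensorProduct.map LinearMap.id C.antipode) ∘ₗ C.braid)) ∘ₗ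
    (TensorProduct.assoc k H H H).toLinearMap ∘ₗ
    (TensorProduct.map C.comul LinearMap.id)

/-- The commutator `[x,y] = φ(|x₂|,|y₁|) x₁y₁S(x₂)S(y₂) = (x ▷ y₁) S(y₂)`. -/
noncomputable def commMap : H ⊗[k] H →ₗ[k] H :=
  C.mul ∘ₗ (TensorProduct.map C.adj C.antipode) ∘ₗ
    (TensorProduct.assoc k H H H).symm.toLinearMap ∘ₗ
    (TensorProduct.map LinearMap.id C.comul)

/-- The comultiplication of the tensor-product (product) coalgebra `H ⊗ H`:
`x ⊗ y ↦ φ(|x₂|,|y₁|) (x₁⊗y₁)⊗(x₂⊗y₂)`. -/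
noncomputable def comul2 : H ⊗[k] H →ₗ[k] (H ⊗[k] H) ⊗[k] (H ⊗[k] H) :=
  midMap k C.braid ∘ₗ TensorProduct.map C.comul C.comul

/-- The counit of the tensor-product coalgebra `H ⊗ H`. -/
noncomputable def counit2 : H ⊗[k] H →ₗ[k] k :=
  (TensorProduct.lid k k).toLinearMap ∘ₗ TensorProduct.map C.counit C.counit

/-- `V` is a (graded) color Hopf subalgebra of `H`. -/
structure IsCHSub (V : Submodule k H) : Prop where
  one_mem : C.one ∈ V
  mul_mem : ∀ x ∈ V, ∀ y ∈ V, C.mul (x ⊗ₜ[k] y) ∈ V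
  comul_mem : ∀ x ∈ V,
    C.comul x ∈ LinearMap.range (TensorProduct.map V.subtype V.subtype)
  antipode_mem : ∀ x ∈ V, C.antipode x ∈ V
  graded : ∀ x ∈ V, x ∈ Submodule.span k {y : H | y ∈ V ∧ ∃ g : G, y ∈ C.grade g}

/-- `V` is normal: closed under the adjoint action of all of `H`. -/
def IsNormal (V : Submodule k H) : Prop :=
  ∀ a : H, ∀ x ∈ V, C.adj (a ⊗ₜ[k] x) ∈ V

/-- The subalgebra (as a submodule) generated by a set. -/
def genFrom (Sgen : Set H) : Submodule k H :=
  sInf {V : Submodule k H |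
    Sgen ⊆ ↑V ∧ C.one ∈ V ∧ ∀ x ∈ V, ∀ y ∈ V, C.mul (x ⊗ₜ[k] y) ∈ V}

/-- The commutator subalgebra `[X,Y]`, generated by all `[x,y]` with `x ∈ V`, `y ∈ W`. -/
def commSub (V W : Submodule k H) : Submodule k H :=
  C.genFrom {z : H | ∃ x ∈ V, ∃ y ∈ W, z = C.commMap (x ⊗ₜ[k] y)}

/-- The graded subspace `VW` spanned by products `vw`. -/
def prodSpan (V W : Submodule k H) : Submodule k H :=
  Submodule.span k {z : H | ∃ x ∈ V, ∃ y ∈ W, z = C.mul (x ⊗ₜ[k] y)}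

/-- The Hopf kernel `Hker(f) = {x : x₁ ⊗ f(x₂) = x ⊗ 1}` of a map `f : H → B`. -/
noncomputable def hkerOf {B : Type*} [AddCommGroup B] [Module k B]
    (CB : ColorHopfAlg k G B) (f : H →ₗ[k] B) : Submodule k H :=
  LinearMap.ker
    (((TensorProduct.map LinearMap.id f) ∘ₗ C.comul) -
      (TensorProduct.mk k H B).flip CB.one)

end ColorHopfAlg

/-- A morphism of color Hopf algebras. -/
structure IsColorHom {A B : Type*} [AddCommGroup A] [Module k A]
    [AddCommGroup B] [Module k B]
    (CA : ColorHopfAlg k G A) (CB : ColorHopfAlg k G B) (f : A →ₗ[k] B) : Prop where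
  map_mul : ∀ x y : A, f (CA.mul (x ⊗ₜ[k] y)) = CB.mul (f x ⊗ₜ[k] f y)
  map_one : f CA.one = CB.one
  map_comul : CB.comul ∘ₗ f = (TensorProduct.map f f) ∘ₗ CA.comul
  map_counit : CB.counit ∘ₗ f = CA.counit
  map_grade : ∀ g : G, ∀ x ∈ CA.grade g, f x ∈ CB.grade g

/-- A color Hopf crossed module `(A, H, d)`. -/
structure ColorCrossedMod {A H : Type*} [AddCommGroup A] [Module k A]
    [AddCommGroup H] [Module k H]
    (CA : ColorHopfAlg k G A) (CH : ColorHopfAlg k G H) where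
  cAH : A ⊗[k] H →ₗ[k] H ⊗[k] A
  cHA : H ⊗[k] A →ₗ[k] A ⊗[k] H
  cAH_apply : ∀ (g h : G) (a : A) (x : H), a ∈ CA.grade g → x ∈ CH.grade h →
    cAH (a ⊗ₜ[k] x) = CA.φ g h • (x ⊗ₜ[k] a)
  cHA_apply : ∀ (g h : G) (x : H) (a : A), x ∈ CH.grade g → a ∈ CA.grade h →
    cHA (x ⊗ₜ[k] a) = CH.φ g h • (a ⊗ₜ[k] x)
  φ_eq : CH.φ = CA.φ
  act : A ⊗[k] H →ₗ[k] H
  act_one_left : ∀ x : H, act (CA.one ⊗ₜ[k] x) = x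
  act_act : ∀ (a b : A) (x : H),
    act (a ⊗ₜ[k] act (b ⊗ₜ[k] x)) = act (CA.mul (a ⊗ₜ[k] b) ⊗ₜ[k] x)
  act_one : ∀ a : A, act (a ⊗ₜ[k] CH.one) = CA.counit a • CH.one
  counit_act : ∀ (a : A) (x : H),
    CH.counit (act (a ⊗ₜ[k] x)) = CA.counit a * CH.counit x
  comul_act : CH.comul ∘ₗ act =
    (TensorProduct.map act act) ∘ₗ midMap k cAH ∘ₗ
      (TensorProduct.map CA.comul CH.comul)
  act_mul : act ∘ₗ (TensorProduct.map LinearMap.id CH.mul) =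
    CH.mul ∘ₗ (TensorProduct.map act act) ∘ₗ midMap k cAH ∘ₗ
      (TensorProduct.map CA.comul LinearMap.id)
  act_grade : ∀ (g h : G) (a : A) (x : H), a ∈ CA.grade g → x ∈ CH.grade h →
    act (a ⊗ₜ[k] x) ∈ CH.grade (g * h)
  d : H →ₗ[k] A
  d_hom : IsColorHom k G CH CA d
  peiffer₁ : d ∘ₗ act = CA.adj ∘ₗ (TensorProduct.map LinearMap.id d)
  peiffer₂ : act ∘ₗ (TensorProduct.map d LinearMap.id) = CH.adj

namespace ColorCrossedMod

variable {k G}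
variable {A H : Type*} [AddCommGroup A] [Module k A] [AddCommGroup H] [Module k H]
variable {CA : ColorHopfAlg k G A} {CH : ColorHopfAlg k G H}

/-- The multiplication of the semi-direct (smash) product `H ⋊ A`:
`(h⊗a)(h'⊗a') = φ(|a₂|,|h'|) h (a₁·h') ⊗ a₂a'`. -/
noncomputable def smashMul (M : ColorCrossedMod k G CA CH) : (H ⊗[k] A) ⊗[k] (H ⊗[k] A) →ₗ[k] H ⊗[k] A :=
  (TensorProduct.map CH.mul CA.mul) ∘ₗ
  (TensorProduct.assoc k (H ⊗[k] H) A A).toLinearMap ∘ₗ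
  (TensorProduct.map (TensorProduct.assoc k H H A).symm.toLinearMap LinearMap.id) ∘ₗ
  (TensorProduct.map
    (TensorProduct.map LinearMap.id (TensorProduct.map M.act LinearMap.id))
    LinearMap.id) ∘ₗ
  (TensorProduct.map
    ((TensorProduct.map LinearMap.id
        ((TensorProduct.assoc k A H A).symm.toLinearMap ∘ₗ
          (TensorProduct.map LinearMap.id M.cAH) ∘ₗ
          (TensorProduct.assoc k A A H).toLinearMap)) ∘ₗ
      (TensorProduct.assoc k H (A ⊗[k] A) H).toLinearMap)
    LinearMap.id) ∘ₗ
  (TensorProduct.assoc k (H ⊗[k] (A ⊗[k] A)) H A).symm.toLinearMap ∘ₗ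
  (TensorProduct.map (TensorProduct.map LinearMap.id CA.comul) LinearMap.id)

/-- The comultiplication of `H ⋊ A` (tensor-product coalgebra twisted by `φ`). -/
noncomputable def smashComul (M : ColorCrossedMod k G CA CH) : H ⊗[k] A →ₗ[k] (H ⊗[k] A) ⊗[k] (H ⊗[k] A) :=
  midMap k M.cHA ∘ₗ TensorProduct.map CH.comul CA.comul

/-- The counit of `H ⋊ A`. -/
noncomputable def smashCounit (_M : ColorCrossedMod k G CA CH) : H ⊗[k] A →ₗ[k] k :=
  (TensorProduct.lid k k).toLinearMap ∘ₗ TensorProduct.map CH.counit CA.counit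

end ColorCrossedMod


/-! ### Auxiliary development for the proof -/

section AuxDevelopment

variable {k G}
variable {H : Type*} [AddCommGroup H] [Module k H]

/-- Lift an equality `A ∘ B = C ∘ D` across a further precomposition. -/
lemma comp_rw {M₀ M₁ M₂ M₃ N₂ : Type*}
    [AddCommGroup M₀] [Module k M₀] [AddCommGroup M₁] [Module k M₁]
    [AddCommGroup M₂] [Module k M₂] [AddCommGroup M₃] [Module k M₃]
    [AddCommGroup N₂] [Module k N₂]
    {A : M₂ →ₗ[k] M₃} {B : M₁ →ₗ[k] M₂} {C' : N₂ →ₗ[k] M₃} {D : M₁ →ₗ[k] N₂}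
    (h : A ∘ₗ B = C' ∘ₗ D) (X : M₀ →ₗ[k] M₁) :
    A ∘ₗ (B ∘ₗ X) = C' ∘ₗ (D ∘ₗ X) := by
  rw [← LinearMap.comp_assoc, h, LinearMap.comp_assoc]

/-- Lift an equality `A ∘ B = E` across a further precomposition. -/
lemma comp_rw₁ {M₀ M₁ M₂ M₃ : Type*}
    [AddCommGroup M₀] [Module k M₀] [AddCommGroup M₁] [Module k M₁]
    [AddCommGroup M₂] [Module k M₂] [AddCommGroup M₃] [Module k M₃]
    {A : M₂ →ₗ[k] M₃} {B : M₁ →ₗ[k] M₂} {E : M₁ →ₗ[k] M₃}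
    (h : A ∘ₗ B = E) (X : M₀ →ₗ[k] M₁) :
    A ∘ₗ (B ∘ₗ X) = E ∘ₗ X := by
  rw [← LinearMap.comp_assoc, h]

lemma smulRight_comp' {M N P : Type*} [AddCommGroup M] [Module k M]
    [AddCommGroup N] [Module k N] [AddCommGroup P] [Module k P]
    (ε : M →ₗ[k] k) (b : N) (f : P →ₗ[k] M) :
    (LinearMap.smulRight ε b) ∘ₗ f = LinearMap.smulRight (ε ∘ₗ f) b := by
  ext x; simp

lemma comp_smulRight' {M N P : Type*} [AddCommGroup M] [Module k M]
    [AddCommGroup N] [Module k N] [AddCommGroup P] [Module k P]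
    (ε : M →ₗ[k] k) (b : N) (f : N →ₗ[k] P) :
    f ∘ₗ (LinearMap.smulRight ε b) = LinearMap.smulRight ε (f b) := by
  ext x; simp

lemma midMap_tmul {A B : Type*} [AddCommGroup A] [Module k A]
    [AddCommGroup B] [Module k B] (c : A ⊗[k] B →ₗ[k] B ⊗[k] A)
    (a a' : A) (b b' : B) :
    midMap k c ((a ⊗ₜ[k] a') ⊗ₜ[k] (b ⊗ₜ[k] b')) =
      TensorProduct.map ((TensorProduct.mk k A B) a)
        ((TensorProduct.mk k A B).flip b') (c (a' ⊗ₜ[k] b)) := by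
  have h : ∀ t : B ⊗[k] A,
      (TensorProduct.assoc k A B (A ⊗[k] B)).symm
        (a ⊗ₜ[k] (TensorProduct.assoc k B A B) (t ⊗ₜ[k] b')) =
      TensorProduct.map ((TensorProduct.mk k A B) a)
        ((TensorProduct.mk k A B).flip b') t := by
    intro t
    induction t using TensorProduct.induction_on with
    | zero => simp
    | tmul u v => simp
    | add u v hu hv =>
        simp only [TensorProduct.add_tmul, map_add, TensorProduct.tmul_add, hu, hv]
  unfold midMap
  simp only [LinearMap.coe_comp, Function.comp_apply, LinearEquiv.coe_coe,
    TensorProduct.assoc_tmul, TensorProduct.map_tmul, LinearMap.id_coe, id_eq,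
    TensorProduct.assoc_symm_tmul]
  exact h _

namespace ColorHopfAlg

variable (C : ColorHopfAlg k G H)

lemma φ_one_left (g : G) : C.φ 1 g = 1 := by
  have h := C.φ_mul_left 1 1 g
  rw [one_mul] at h
  have h2 : C.φ 1 g * C.φ 1 g = C.φ 1 g * 1 := by rw [mul_one, ← h]
  exact mul_left_cancel₀ (C.φ_ne 1 g) h2

lemma φ_one_right (g : G) : C.φ g 1 = 1 := by
  have h := C.φ_mul_right g 1 1
  rw [one_mul] at h
  have h2 : C.φ g 1 * C.φ g 1 = C.φ g 1 * 1 := by rw [mul_one, ← h]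
  exact mul_left_cancel₀ (C.φ_ne g 1) h2

lemma homogSpan : Submodule.span k {y : H | ∃ g : G, y ∈ C.grade g} = ⊤ := by
  have hs : (⋃ g : G, ((C.grade g : Submodule k H) : Set H))
      = {y : H | ∃ g : G, y ∈ C.grade g} := by
    ext y; simp
  rw [← hs, ← Submodule.iSup_eq_span, C.grade_top]

lemma hom_ext {M : Type*} [AddCommGroup M] [Module k M] {F F' : H →ₗ[k] M}
    (h : ∀ (g : G) (x : H), x ∈ C.grade g → F x = F' x) : F = F' :=
  LinearMap.ext_on C.homogSpan (by rintro x ⟨g, hx⟩; exact h g x hx)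

lemma hom_ext₂ {M : Type*} [AddCommGroup M] [Module k M] {F F' : H ⊗[k] H →ₗ[k] M}
    (h : ∀ (g₁ g₂ : G) (x y : H), x ∈ C.grade g₁ → y ∈ C.grade g₂ →
      F (x ⊗ₜ[k] y) = F' (x ⊗ₜ[k] y)) : F = F' := by
  apply TensorProduct.ext
  apply C.hom_ext
  intro g₁ x hx
  apply C.hom_ext
  intro g₂ y hy
  simpa using h g₁ g₂ x y hx hy

lemma hom_ext₄ {M : Type*} [AddCommGroup M] [Module k M]
    {F F' : (H ⊗[k] H) ⊗[k] (H ⊗[k] H) →ₗ[k] M}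
    (h : ∀ (g₁ g₂ g₃ g₄ : G) (x y z w : H), x ∈ C.grade g₁ → y ∈ C.grade g₂ →
      z ∈ C.grade g₃ → w ∈ C.grade g₄ →
      F ((x ⊗ₜ[k] y) ⊗ₜ[k] (z ⊗ₜ[k] w)) = F' ((x ⊗ₜ[k] y) ⊗ₜ[k] (z ⊗ₜ[k] w))) :
    F = F' := by
  apply TensorProduct.ext
  apply C.hom_ext₂
  intro g₁ g₂ x y hx hy
  apply C.hom_ext₂
  intro g₃ g₄ z w hz hw
  simpa using h g₁ g₂ g₃ g₄ x y z w hx hy hz hw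

lemma hom_ext₆ {M : Type*} [AddCommGroup M] [Module k M]
    {F F' : ((H ⊗[k] H) ⊗[k] (H ⊗[k] H)) ⊗[k] (H ⊗[k] H) →ₗ[k] M}
    (h : ∀ (g₁ g₂ g₃ g₄ g₅ g₆ : G) (x y z w u v : H),
      x ∈ C.grade g₁ → y ∈ C.grade g₂ → z ∈ C.grade g₃ → w ∈ C.grade g₄ →
      u ∈ C.grade g₅ → v ∈ C.grade g₆ →
      F (((x ⊗ₜ[k] y) ⊗ₜ[k] (z ⊗ₜ[k] w)) ⊗ₜ[k] (u ⊗ₜ[k] v)) =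
      F' (((x ⊗ₜ[k] y) ⊗ₜ[k] (z ⊗ₜ[k] w)) ⊗ₜ[k] (u ⊗ₜ[k] v))) : F = F' := by
  apply TensorProduct.ext
  apply C.hom_ext₄
  intro g₁ g₂ g₃ g₄ x y z w hx hy hz hw
  apply C.hom_ext₂
  intro g₅ g₆ u v hu hv
  simpa using h g₁ g₂ g₃ g₄ g₅ g₆ x y z w u v hx hy hz hw hu hv

lemma braid_natural {f g : H →ₗ[k] H}
    (hf : ∀ (a : G) (x : H), x ∈ C.grade a → f x ∈ C.grade a)
    (hg : ∀ (a : G) (x : H), x ∈ C.grade a → g x ∈ C.grade a) :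
    C.braid ∘ₗ TensorProduct.map f g = TensorProduct.map g f ∘ₗ C.braid := by
  apply C.hom_ext₂
  intro g₁ g₂ x y hx hy
  simp only [LinearMap.coe_comp, Function.comp_apply, TensorProduct.map_tmul]
  rw [C.braid_apply g₁ g₂ (f x) (g y) (hf _ _ hx) (hg _ _ hy),
    C.braid_apply g₁ g₂ x y hx hy, map_smul, TensorProduct.map_tmul]

lemma mid_natural {f₁ f₂ g₁ g₂ : H →ₗ[k] H}
    (hnat : C.braid ∘ₗ TensorProduct.map f₂ g₁ = TensorProduct.map g₁ f₂ ∘ₗ C.braid) :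
    midMap k C.braid ∘ₗ
        TensorProduct.map (TensorProduct.map f₁ f₂) (TensorProduct.map g₁ g₂) =
      TensorProduct.map (TensorProduct.map f₁ g₁) (TensorProduct.map f₂ g₂) ∘ₗ
        midMap k C.braid := by
  apply TensorProduct.ext_fourfold'
  intro x y z w
  simp only [LinearMap.coe_comp, Function.comp_apply, TensorProduct.map_tmul]
  rw [midMap_tmul, midMap_tmul]
  have h1 : C.braid (f₂ y ⊗ₜ[k] g₁ z) = TensorProduct.map g₁ f₂ (C.braid (y ⊗ₜ[k] z)) := by
    have h := LinearMap.congr_fun hnat (y ⊗ₜ[k] z)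
    simpa using h
  rw [h1]
  have h2 : ∀ t : H ⊗[k] H,
      TensorProduct.map ((TensorProduct.mk k H H) (f₁ x))
          ((TensorProduct.mk k H H).flip (g₂ w)) (TensorProduct.map g₁ f₂ t) =
      TensorProduct.map (TensorProduct.map f₁ g₁) (TensorProduct.map f₂ g₂)
        (TensorProduct.map ((TensorProduct.mk k H H) x)
          ((TensorProduct.mk k H H).flip w) t) := by
    intro t
    induction t using TensorProduct.induction_on with
    | zero => simp
    | tmul u v => simp
    | add u v hu hv => simp only [map_add, hu, hv]
  exact h2 _

lemma coassoc' : TensorProduct.map C.comul LinearMap.id ∘ₗ C.comul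
    = (TensorProduct.assoc k H H H).symm.toLinearMap ∘ₗ
        TensorProduct.map LinearMap.id C.comul ∘ₗ C.comul := by
  rw [LinearEquiv.eq_toLinearMap_symm_comp]
  exact C.coassoc

lemma mid_comul : midMap k C.braid ∘ₗ
      TensorProduct.map C.comul C.comul ∘ₗ C.comul =
    TensorProduct.map C.comul C.comul ∘ₗ C.comul := by
  have hsplit : TensorProduct.map C.comul C.comul
      = TensorProduct.map LinearMap.id C.comul ∘ₗ TensorProduct.map C.comul LinearMap.id := by
    rw [← TensorProduct.map_comp, LinearMap.comp_id, LinearMap.id_comp]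
  have hnat : (TensorProduct.assoc k H H (H ⊗[k] H)).toLinearMap ∘ₗ
        TensorProduct.map (LinearMap.id : H ⊗[k] H →ₗ[k] H ⊗[k] H) C.comul
      = TensorProduct.map LinearMap.id (TensorProduct.map LinearMap.id C.comul) ∘ₗ
        (TensorProduct.assoc k H H H).toLinearMap := by
    have h := TensorProduct.map_map_comp_assoc_eq (R := k)
      (LinearMap.id : H →ₗ[k] H) (LinearMap.id : H →ₗ[k] H) C.comul
    rw [TensorProduct.map_id] at h
    exact h.symm
  have hE : (TensorProduct.assoc k H H (H ⊗[k] H)).toLinearMap ∘ₗ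
        (TensorProduct.map C.comul C.comul ∘ₗ C.comul)
      = TensorProduct.map LinearMap.id
            (TensorProduct.map LinearMap.id C.comul ∘ₗ C.comul) ∘ₗ C.comul := by
    have hnat' := congrArg
      (fun f => f ∘ₗ (TensorProduct.map C.comul (LinearMap.id : H →ₗ[k] H) ∘ₗ C.comul)) hnat
    simp only [LinearMap.comp_assoc] at hnat'
    rw [hsplit, LinearMap.comp_assoc, hnat', C.coassoc,
      ← LinearMap.comp_assoc, ← TensorProduct.map_comp, LinearMap.comp_id]
  have hK : ((TensorProduct.assoc k H H H).toLinearMap ∘ₗ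
        TensorProduct.map C.braid LinearMap.id ∘ₗ
        (TensorProduct.assoc k H H H).symm.toLinearMap) ∘ₗ
        (TensorProduct.map LinearMap.id C.comul ∘ₗ C.comul)
      = TensorProduct.map LinearMap.id C.comul ∘ₗ C.comul := by
    have h1 : (TensorProduct.assoc k H H H).symm.toLinearMap ∘ₗ
        (TensorProduct.map LinearMap.id C.comul ∘ₗ C.comul)
        = TensorProduct.map C.comul LinearMap.id ∘ₗ C.comul := C.coassoc'.symm
    have h2 : TensorProduct.map C.braid LinearMap.id ∘ₗ
        TensorProduct.map C.comul LinearMap.id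
        = TensorProduct.map C.comul (LinearMap.id : H →ₗ[k] H) := by
      rw [← TensorProduct.map_comp, C.cocomm, LinearMap.comp_id]
    have h2' := congrArg (fun f => f ∘ₗ C.comul) h2
    simp only [LinearMap.comp_assoc] at h2'
    rw [LinearMap.comp_assoc, LinearMap.comp_assoc, h1, h2', C.coassoc]
  have hKmap : TensorProduct.map (LinearMap.id : H →ₗ[k] H)
        ((TensorProduct.assoc k H H H).toLinearMap ∘ₗ
          TensorProduct.map C.braid LinearMap.id ∘ₗ
          (TensorProduct.assoc k H H H).symm.toLinearMap) ∘ₗ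
      TensorProduct.map (LinearMap.id : H →ₗ[k] H)
        (TensorProduct.map LinearMap.id C.comul ∘ₗ C.comul)
      = TensorProduct.map (LinearMap.id : H →ₗ[k] H)
          (TensorProduct.map LinearMap.id C.comul ∘ₗ C.comul) := by
    rw [← TensorProduct.map_comp (f₂ := (LinearMap.id : H →ₗ[k] H)) (f₁ := LinearMap.id),
      LinearMap.comp_id, hK]
  unfold midMap
  have hKmap' := congrArg (fun f => f ∘ₗ C.comul) hKmap
  simp only [LinearMap.comp_assoc] at hKmap'
  rw [LinearMap.comp_assoc, LinearMap.comp_assoc, hE, hKmap',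
    LinearEquiv.toLinearMap_symm_comp_eq]
  exact hE.symm

lemma counit_left' : (TensorProduct.lid k H).toLinearMap ∘ₗ
    TensorProduct.map C.counit LinearMap.id ∘ₗ C.comul = LinearMap.id :=
  LinearMap.ext fun x => by simpa using C.counit_left x

lemma counit_right' : (TensorProduct.rid k H).toLinearMap ∘ₗ
    TensorProduct.map LinearMap.id C.counit ∘ₗ C.comul = LinearMap.id :=
  LinearMap.ext fun x => by simpa using C.counit_right x

/-- Convolution product on maps out of `H` into an algebra `(B, mB)`. -/
noncomputable def conv {B : Type*} [AddCommGroup B] [Module k B]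
    (mB : B ⊗[k] B →ₗ[k] B) (f g : H →ₗ[k] B) : H →ₗ[k] B :=
  mB ∘ₗ TensorProduct.map f g ∘ₗ C.comul

lemma conv_unit_left {B : Type*} [AddCommGroup B] [Module k B]
    (mB : B ⊗[k] B →ₗ[k] B) (oneB : B)
    (honel : ∀ y : B, mB (oneB ⊗ₜ[k] y) = y) (f : H →ₗ[k] B) :
    C.conv mB (LinearMap.smulRight C.counit oneB) f = f := by
  have key : mB ∘ₗ TensorProduct.map (LinearMap.smulRight C.counit oneB) f
      = f ∘ₗ (TensorProduct.lid k H).toLinearMap ∘ₗ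
          TensorProduct.map C.counit LinearMap.id := by
    apply TensorProduct.ext'
    intro a b
    simp only [LinearMap.coe_comp, Function.comp_apply, TensorProduct.map_tmul,
      LinearMap.smulRight_apply, LinearMap.id_coe, id_eq, LinearEquiv.coe_coe,
      TensorProduct.lid_tmul, map_smul]
    rw [← TensorProduct.smul_tmul', map_smul, honel]
  unfold conv
  rw [← LinearMap.comp_assoc, key, LinearMap.comp_assoc, LinearMap.comp_assoc,
    C.counit_left', LinearMap.comp_id]

lemma conv_unit_right {B : Type*} [AddCommGroup B] [Module k B]
    (mB : B ⊗[k] B →ₗ[k] B) (oneB : B)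
    (honer : ∀ y : B, mB (y ⊗ₜ[k] oneB) = y) (f : H →ₗ[k] B) :
    C.conv mB f (LinearMap.smulRight C.counit oneB) = f := by
  have key : mB ∘ₗ TensorProduct.map f (LinearMap.smulRight C.counit oneB)
      = f ∘ₗ (TensorProduct.rid k H).toLinearMap ∘ₗ
          TensorProduct.map LinearMap.id C.counit := by
    apply TensorProduct.ext'
    intro a b
    simp only [LinearMap.coe_comp, Function.comp_apply, TensorProduct.map_tmul,
      LinearMap.smulRight_apply, LinearMap.id_coe, id_eq, LinearEquiv.coe_coe,
      TensorProduct.rid_tmul, map_smul]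
    rw [TensorProduct.tmul_smul, map_smul, honer]
  unfold conv
  rw [← LinearMap.comp_assoc, key, LinearMap.comp_assoc, LinearMap.comp_assoc,
    C.counit_right', LinearMap.comp_id]

lemma conv_assoc {B : Type*} [AddCommGroup B] [Module k B]
    (mB : B ⊗[k] B →ₗ[k] B)
    (hassoc : ∀ x y z : B, mB (mB (x ⊗ₜ[k] y) ⊗ₜ[k] z) = mB (x ⊗ₜ[k] mB (y ⊗ₜ[k] z)))
    (f g h : H →ₗ[k] B) :
    C.conv mB (C.conv mB f g) h = C.conv mB f (C.conv mB g h) := by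
  have key : mB ∘ₗ TensorProduct.map mB LinearMap.id ∘ₗ
        TensorProduct.map (TensorProduct.map f g) h ∘ₗ
        (TensorProduct.assoc k H H H).symm.toLinearMap
      = mB ∘ₗ TensorProduct.map LinearMap.id mB ∘ₗ
          TensorProduct.map f (TensorProduct.map g h) := by
    apply TensorProduct.ext'
    intro a t
    induction t using TensorProduct.induction_on with
    | zero => simp
    | tmul b c =>
        simp only [LinearMap.coe_comp, Function.comp_apply, LinearEquiv.coe_coe,
          TensorProduct.assoc_symm_tmul, TensorProduct.map_tmul, LinearMap.id_coe,
          id_eq]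
        exact hassoc _ _ _
    | add u v hu hv =>
        simp only [TensorProduct.tmul_add, map_add] at hu hv ⊢
        rw [hu, hv]
  unfold conv
  have s1 : TensorProduct.map (mB ∘ₗ TensorProduct.map f g ∘ₗ C.comul) h
      = TensorProduct.map mB LinearMap.id ∘ₗ
          TensorProduct.map (TensorProduct.map f g) h ∘ₗ
          TensorProduct.map C.comul LinearMap.id := by
    rw [← TensorProduct.map_comp, ← TensorProduct.map_comp]
    simp only [LinearMap.id_comp, LinearMap.comp_id]
  have s2 : TensorProduct.map f (mB ∘ₗ TensorProduct.map g h ∘ₗ C.comul)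
      = TensorProduct.map LinearMap.id mB ∘ₗ
          TensorProduct.map f (TensorProduct.map g h) ∘ₗ
          TensorProduct.map LinearMap.id C.comul := by
    rw [← TensorProduct.map_comp, ← TensorProduct.map_comp]
    simp only [LinearMap.id_comp, LinearMap.comp_id]
  rw [s1, s2]
  have key' := congrArg (fun q => q ∘ₗ (TensorProduct.map LinearMap.id C.comul ∘ₗ C.comul)) key
  simp only [LinearMap.comp_assoc] at key' ⊢
  rw [C.coassoc', key']

lemma conv_inv_unique {B : Type*} [AddCommGroup B] [Module k B]
    (mB : B ⊗[k] B →ₗ[k] B) (oneB : B)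
    (hassoc : ∀ x y z : B, mB (mB (x ⊗ₜ[k] y) ⊗ₜ[k] z) = mB (x ⊗ₜ[k] mB (y ⊗ₜ[k] z)))
    (honel : ∀ y : B, mB (oneB ⊗ₜ[k] y) = y)
    (honer : ∀ y : B, mB (y ⊗ₜ[k] oneB) = y)
    {f a b : H →ₗ[k] B}
    (ha : C.conv mB a f = LinearMap.smulRight C.counit oneB)
    (hb : C.conv mB f b = LinearMap.smulRight C.counit oneB) : a = b := by
  have h1 : a = C.conv mB a (C.conv mB f b) := by
    rw [hb, C.conv_unit_right mB oneB honer a]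
  rw [h1, ← C.conv_assoc mB hassoc, ha, C.conv_unit_left mB oneB honel b]

/-- `m₂` on pure homogeneous tensors. -/
lemma mul2_tmul (g₂ g₃ : G) (x₁ x₂ y₁ y₂ : H)
    (h₂ : x₂ ∈ C.grade g₂) (h₃ : y₁ ∈ C.grade g₃) :
    TensorProduct.map C.mul C.mul (midMap k C.braid
        ((x₁ ⊗ₜ[k] x₂) ⊗ₜ[k] (y₁ ⊗ₜ[k] y₂)))
      = C.φ g₂ g₃ • (C.mul (x₁ ⊗ₜ[k] y₁) ⊗ₜ[k] C.mul (x₂ ⊗ₜ[k] y₂)) := by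
  rw [midMap_tmul, C.braid_apply g₂ g₃ x₂ y₁ h₂ h₃]
  simp only [map_smul, TensorProduct.map_tmul, TensorProduct.mk_apply,
    LinearMap.flip_apply]

lemma mul2_one_left : ∀ t : H ⊗[k] H,
    (TensorProduct.map C.mul C.mul ∘ₗ midMap k C.braid)
      ((C.one ⊗ₜ[k] C.one) ⊗ₜ[k] t) = t := by
  have key : (TensorProduct.map C.mul C.mul ∘ₗ midMap k C.braid) ∘ₗ
      (TensorProduct.mk k (H ⊗[k] H) (H ⊗[k] H)) (C.one ⊗ₜ[k] C.one)
      = LinearMap.id := by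
    apply C.hom_ext₂
    intro g₁ g₂ x y hx hy
    simp only [LinearMap.coe_comp, Function.comp_apply, TensorProduct.mk_apply,
      LinearMap.id_coe, id_eq]
    rw [C.mul2_tmul 1 g₁ C.one C.one x y C.one_mem hx, C.one_mul', C.one_mul',
      C.φ_one_left, one_smul]
  intro t
  have := LinearMap.congr_fun key t
  simpa using this

lemma mul2_one_right : ∀ t : H ⊗[k] H,
    (TensorProduct.map C.mul C.mul ∘ₗ midMap k C.braid)
      (t ⊗ₜ[k] (C.one ⊗ₜ[k] C.one)) = t := by
  have key : (TensorProduct.map C.mul C.mul ∘ₗ midMap k C.braid) ∘ₗ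
      (TensorProduct.mk k (H ⊗[k] H) (H ⊗[k] H)).flip (C.one ⊗ₜ[k] C.one)
      = LinearMap.id := by
    apply C.hom_ext₂
    intro g₁ g₂ x y hx hy
    simp only [LinearMap.coe_comp, Function.comp_apply, LinearMap.flip_apply,
      TensorProduct.mk_apply, LinearMap.id_coe, id_eq]
    rw [C.mul2_tmul g₂ 1 x y C.one C.one hy C.one_mem, C.mul_one', C.mul_one',
      C.φ_one_right, one_smul]
  intro t
  have := LinearMap.congr_fun key t
  simpa using this

lemma mul2_assoc : ∀ t u v : H ⊗[k] H,
    (TensorProduct.map C.mul C.mul ∘ₗ midMap k C.braid)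
      ((TensorProduct.map C.mul C.mul ∘ₗ midMap k C.braid) (t ⊗ₜ[k] u) ⊗ₜ[k] v)
    = (TensorProduct.map C.mul C.mul ∘ₗ midMap k C.braid)
        (t ⊗ₜ[k] (TensorProduct.map C.mul C.mul ∘ₗ midMap k C.braid) (u ⊗ₜ[k] v)) := by
  have key : (TensorProduct.map C.mul C.mul ∘ₗ midMap k C.braid) ∘ₗ
        TensorProduct.map (TensorProduct.map C.mul C.mul ∘ₗ midMap k C.braid)
          LinearMap.id
      = (TensorProduct.map C.mul C.mul ∘ₗ midMap k C.braid) ∘ₗ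
          TensorProduct.map LinearMap.id
            (TensorProduct.map C.mul C.mul ∘ₗ midMap k C.braid) ∘ₗ
          (TensorProduct.assoc k (H ⊗[k] H) (H ⊗[k] H) (H ⊗[k] H)).toLinearMap := by
    apply C.hom_ext₆
    intro g₁ g₂ g₃ g₄ g₅ g₆ x y z w u v hx hy hz hw hu hv
    simp only [LinearMap.coe_comp, Function.comp_apply, TensorProduct.map_tmul,
      LinearMap.id_coe, id_eq, LinearEquiv.coe_coe, TensorProduct.assoc_tmul]
    rw [C.mul2_tmul g₂ g₃ x y z w hy hz, ← TensorProduct.smul_tmul']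
    simp only [map_smul]
    rw [C.mul2_tmul (g₂ * g₄) g₅ _ _ u v (C.mul_mem g₂ g₄ y w hy hw) hu,
      C.mul2_tmul g₄ g₅ z w u v hw hu, TensorProduct.tmul_smul]
    simp only [map_smul]
    rw [C.mul2_tmul g₂ (g₃ * g₅) x y _ _ hy (C.mul_mem g₃ g₅ z u hz hu),
      smul_smul, smul_smul, C.mul_assoc', C.mul_assoc', C.φ_mul_left, C.φ_mul_right]
    congr 1
    ring
  intro t u v
  have := LinearMap.congr_fun key ((t ⊗ₜ[k] u) ⊗ₜ[k] v)
  simpa using this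

lemma antipode_left' : C.mul ∘ₗ TensorProduct.map C.antipode LinearMap.id ∘ₗ C.comul
    = LinearMap.smulRight C.counit C.one :=
  LinearMap.ext fun x => by simpa using C.antipode_left x

lemma antipode_right' : C.mul ∘ₗ TensorProduct.map LinearMap.id C.antipode ∘ₗ C.comul
    = LinearMap.smulRight C.counit C.one :=
  LinearMap.ext fun x => by simpa using C.antipode_right x

lemma map_smulRight_comul {X B : Type*} [AddCommGroup X] [Module k X]
    [AddCommGroup B] [Module k B] (f : H →ₗ[k] X) (oneB : B) :
    TensorProduct.map f (LinearMap.smulRight C.counit oneB) ∘ₗ C.comul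
      = ((TensorProduct.mk k X B).flip oneB) ∘ₗ f := by
  have key : TensorProduct.map f (LinearMap.smulRight C.counit oneB)
      = (((TensorProduct.mk k X B).flip oneB) ∘ₗ f) ∘ₗ
          (TensorProduct.rid k H).toLinearMap ∘ₗ
          TensorProduct.map LinearMap.id C.counit := by
    apply TensorProduct.ext'
    intro a b
    simp only [LinearMap.coe_comp, Function.comp_apply, TensorProduct.map_tmul,
      LinearMap.smulRight_apply, LinearMap.id_coe, id_eq, LinearEquiv.coe_coe,
      TensorProduct.rid_tmul, map_smul, LinearMap.flip_apply, TensorProduct.mk_apply]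
    rw [TensorProduct.tmul_smul, TensorProduct.smul_tmul']
  rw [key]
  simp only [LinearMap.comp_assoc]
  rw [C.counit_right', LinearMap.comp_id]

/-- `Δ` is an algebra map: convolution with values in `(H⊗H, m₂)`. -/
lemma conv_comul (f g : H →ₗ[k] H) :
    C.conv (TensorProduct.map C.mul C.mul ∘ₗ midMap k C.braid)
        (C.comul ∘ₗ f) (C.comul ∘ₗ g)
      = C.comul ∘ₗ C.conv C.mul f g := by
  unfold conv
  rw [TensorProduct.map_comp]
  have h := congrArg (fun q => q ∘ₗ (TensorProduct.map f g ∘ₗ C.comul)) C.comul_mul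
  simp only [LinearMap.comp_assoc] at h ⊢
  rw [← h]

lemma comul_smulRight_one : C.comul ∘ₗ LinearMap.smulRight C.counit C.one
    = LinearMap.smulRight C.counit (C.one ⊗ₜ[k] C.one) :=
  LinearMap.ext fun x => by simp [C.comul_one]

lemma conv_comul_comulS :
    C.conv (TensorProduct.map C.mul C.mul ∘ₗ midMap k C.braid) C.comul
        (C.comul ∘ₗ C.antipode)
      = LinearMap.smulRight C.counit (C.one ⊗ₜ[k] C.one) := by
  have h := C.conv_comul LinearMap.id C.antipode
  rw [LinearMap.comp_id] at h
  rw [h]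
  have h2 : C.conv C.mul LinearMap.id C.antipode
      = LinearMap.smulRight C.counit C.one := C.antipode_right'
  rw [h2, C.comul_smulRight_one]

lemma conv_SS_comul :
    C.conv (TensorProduct.map C.mul C.mul ∘ₗ midMap k C.braid)
        (TensorProduct.map C.antipode C.antipode ∘ₗ C.comul) C.comul
      = LinearMap.smulRight C.counit (C.one ⊗ₜ[k] C.one) := by
  unfold conv
  have h1 : TensorProduct.map (TensorProduct.map C.antipode C.antipode ∘ₗ C.comul)
        C.comul
      = TensorProduct.map (TensorProduct.map C.antipode C.antipode) LinearMap.id ∘ₗ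
          TensorProduct.map C.comul C.comul := by
    rw [← TensorProduct.map_comp, LinearMap.id_comp]
  rw [h1]
  have hb : C.braid ∘ₗ TensorProduct.map C.antipode (LinearMap.id : H →ₗ[k] H)
      = TensorProduct.map LinearMap.id C.antipode ∘ₗ C.braid :=
    C.braid_natural (fun a x hx => C.antipode_mem a x hx) (fun a x hx => hx)
  have hmid := C.mid_natural (f₁ := C.antipode) (f₂ := C.antipode)
    (g₁ := LinearMap.id) (g₂ := LinearMap.id) hb
  rw [TensorProduct.map_id] at hmid
  -- chain everything
  have hmid' := congrArg
    (fun q => TensorProduct.map C.mul C.mul ∘ₗ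
      (q ∘ₗ (TensorProduct.map C.comul C.comul ∘ₗ C.comul))) hmid
  simp only [LinearMap.comp_assoc] at hmid' ⊢
  rw [hmid', C.mid_comul]
  have merge1 : TensorProduct.map C.mul C.mul ∘ₗ
        TensorProduct.map (TensorProduct.map C.antipode LinearMap.id)
          (TensorProduct.map C.antipode LinearMap.id)
      = TensorProduct.map (C.mul ∘ₗ TensorProduct.map C.antipode LinearMap.id)
          (C.mul ∘ₗ TensorProduct.map C.antipode LinearMap.id) := by
    rw [← TensorProduct.map_comp]
  have merge2 : TensorProduct.map
        (C.mul ∘ₗ TensorProduct.map C.antipode LinearMap.id)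
        (C.mul ∘ₗ TensorProduct.map C.antipode LinearMap.id) ∘ₗ
        TensorProduct.map C.comul C.comul
      = TensorProduct.map (LinearMap.smulRight C.counit C.one)
          (LinearMap.smulRight C.counit C.one) := by
    rw [← TensorProduct.map_comp]
    rw [LinearMap.comp_assoc, C.antipode_left']
  have merge1' := congrArg
    (fun q => q ∘ₗ (TensorProduct.map C.comul C.comul ∘ₗ C.comul)) merge1
  simp only [LinearMap.comp_assoc] at merge1'
  rw [merge1']
  have merge2' := congrArg (fun q => q ∘ₗ C.comul) merge2
  simp only [LinearMap.comp_assoc] at merge2'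
  rw [merge2']
  rw [C.map_smulRight_comul (LinearMap.smulRight C.counit C.one) C.one]
  apply LinearMap.ext
  intro x
  simp [TensorProduct.smul_tmul']

/-- Cocommutative case: the antipode is a coalgebra morphism. -/
lemma comul_antipode : C.comul ∘ₗ C.antipode
    = TensorProduct.map C.antipode C.antipode ∘ₗ C.comul :=
  (C.conv_inv_unique (TensorProduct.map C.mul C.mul ∘ₗ midMap k C.braid)
    (C.one ⊗ₜ[k] C.one) C.mul2_assoc C.mul2_one_left C.mul2_one_right
    C.conv_SS_comul C.conv_comul_comulS).symm

lemma hom_mul' {H' : Type*} [AddCommGroup H'] [Module k H'] (C' : ColorHopfAlg k G H')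
    {f : H →ₗ[k] H'} (hf : IsColorHom k G C C' f) :
    C'.mul ∘ₗ TensorProduct.map f f = f ∘ₗ C.mul :=
  TensorProduct.ext' fun x y => by simpa using (hf.map_mul x y).symm

lemma hom_antipode {H' : Type*} [AddCommGroup H'] [Module k H'] (C' : ColorHopfAlg k G H')
    {f : H →ₗ[k] H'} (hf : IsColorHom k G C C' f) :
    C'.antipode ∘ₗ f = f ∘ₗ C.antipode := by
  refine C.conv_inv_unique C'.mul C'.one C'.mul_assoc' C'.one_mul' C'.mul_one'
    (f := f) ?_ ?_
  · unfold conv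
    have h1 : TensorProduct.map (C'.antipode ∘ₗ f) f
        = TensorProduct.map C'.antipode LinearMap.id ∘ₗ TensorProduct.map f f := by
      rw [← TensorProduct.map_comp]
      simp only [LinearMap.id_comp, LinearMap.comp_id]
    rw [h1]
    simp only [LinearMap.comp_assoc]
    rw [← hf.map_comul]
    have AL := congrArg (fun q => q ∘ₗ f) C'.antipode_left'
    simp only [LinearMap.comp_assoc] at AL
    rw [AL, smulRight_comp', hf.map_counit]
  · unfold conv
    have h1 : TensorProduct.map f (f ∘ₗ C.antipode)
        = TensorProduct.map f f ∘ₗ TensorProduct.map LinearMap.id C.antipode := by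
      rw [← TensorProduct.map_comp]
      simp only [LinearMap.id_comp, LinearMap.comp_id]
    rw [h1]
    have hm := congrArg
      (fun q => q ∘ₗ (TensorProduct.map LinearMap.id C.antipode ∘ₗ C.comul))
      (C.hom_mul' C' hf)
    simp only [LinearMap.comp_assoc] at hm ⊢
    rw [hm, C.antipode_right', comp_smulRight', hf.map_one]

end ColorHopfAlg

end AuxDevelopment

section Statements

variable {A1 A0 : Type*} [AddCommGroup A1] [Module k A1] [AddCommGroup A0] [Module k A0]

/-- for a reflexive graph `(p, γ : A₁ → A₀, i : A₀ → A₁)` of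
cocommutative color Hopf algebras and `x ∈ Hker(p)`, the element `S(x₁) i(γ(x₂))`
lies in `Hker(γ)`. -/
theorem element_in_hker_gamma (C1 : ColorHopfAlg k G A1) (C0 : ColorHopfAlg k G A0)
    (hφ : C1.φ = C0.φ) (p γ : A1 →ₗ[k] A0) (i : A0 →ₗ[k] A1)
    (hp : IsColorHom k G C1 C0 p) (hγ : IsColorHom k G C1 C0 γ)
    (hi : IsColorHom k G C0 C1 i)
    (hpi : p ∘ₗ i = LinearMap.id) (hγi : γ ∘ₗ i = LinearMap.id) :
    ∀ x ∈ C1.hkerOf C0 p,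
      (C1.mul ∘ₗ (TensorProduct.map C1.antipode (i ∘ₗ γ)) ∘ₗ C1.comul) x ∈
        C1.hkerOf C0 γ := by
  intro x _hx
  have hjgrade : ∀ (a : G) (z : A1), z ∈ C1.grade a → (i ∘ₗ γ) z ∈ C1.grade a := by
    intro a z hz
    exact hi.map_grade a (γ z) (hγ.map_grade a z hz)
  have hSgrade : ∀ (a : G) (z : A1), z ∈ C1.grade a → C1.antipode z ∈ C1.grade a :=
    fun a z hz => C1.antipode_mem a z hz
  have hnat : C1.braid ∘ₗ TensorProduct.map C1.antipode (i ∘ₗ γ)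
      = TensorProduct.map (i ∘ₗ γ) C1.antipode ∘ₗ C1.braid :=
    C1.braid_natural hSgrade hjgrade
  have hmid := C1.mid_natural (f₁ := C1.antipode) (f₂ := C1.antipode)
    (g₁ := i ∘ₗ γ) (g₂ := i ∘ₗ γ) hnat
  have hcomulj : C1.comul ∘ₗ (i ∘ₗ γ)
      = TensorProduct.map (i ∘ₗ γ) (i ∘ₗ γ) ∘ₗ C1.comul := by
    rw [← LinearMap.comp_assoc, hi.map_comul, LinearMap.comp_assoc, hγ.map_comul,
      ← LinearMap.comp_assoc, ← TensorProduct.map_comp]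
  have hγj : γ ∘ₗ (i ∘ₗ γ) = γ := by
    rw [← LinearMap.comp_assoc, hγi, LinearMap.id_comp]
  have hγS : γ ∘ₗ C1.antipode = C0.antipode ∘ₗ γ := (C1.hom_antipode C0 hγ).symm
  set T : A1 →ₗ[k] A1 :=
    C1.mul ∘ₗ TensorProduct.map C1.antipode (i ∘ₗ γ) ∘ₗ C1.comul with hT
  have hTco : C1.comul ∘ₗ T = TensorProduct.map T T ∘ₗ C1.comul := by
    rw [hT]
    have c1 := congrArg
      (fun q => q ∘ₗ (TensorProduct.map C1.antipode (i ∘ₗ γ) ∘ₗ C1.comul))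
      C1.comul_mul
    simp only [LinearMap.comp_assoc] at c1 ⊢
    rw [c1]
    have c2 : TensorProduct.map C1.comul C1.comul ∘ₗ
        TensorProduct.map C1.antipode (i ∘ₗ γ)
        = TensorProduct.map (TensorProduct.map C1.antipode C1.antipode)
            (TensorProduct.map (i ∘ₗ γ) (i ∘ₗ γ)) ∘ₗ
          TensorProduct.map C1.comul C1.comul := by
      rw [← TensorProduct.map_comp, C1.comul_antipode, hcomulj,
        TensorProduct.map_comp]
    have c2' := congrArg (fun q => q ∘ₗ C1.comul) c2
    simp only [LinearMap.comp_assoc] at c2'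
    rw [c2']
    have hmid' := congrArg
      (fun q => q ∘ₗ (TensorProduct.map C1.comul C1.comul ∘ₗ C1.comul)) hmid
    simp only [LinearMap.comp_assoc] at hmid'
    rw [hmid', C1.mid_comul]
    have m1 : TensorProduct.map C1.mul C1.mul ∘ₗ
        TensorProduct.map (TensorProduct.map C1.antipode (i ∘ₗ γ))
          (TensorProduct.map C1.antipode (i ∘ₗ γ))
        = TensorProduct.map (C1.mul ∘ₗ TensorProduct.map C1.antipode (i ∘ₗ γ))
            (C1.mul ∘ₗ TensorProduct.map C1.antipode (i ∘ₗ γ)) := by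
      rw [← TensorProduct.map_comp]
    have m1' := congrArg
      (fun q => q ∘ₗ (TensorProduct.map C1.comul C1.comul ∘ₗ C1.comul)) m1
    simp only [LinearMap.comp_assoc] at m1'
    rw [m1']
    have m2 : TensorProduct.map (C1.mul ∘ₗ TensorProduct.map C1.antipode (i ∘ₗ γ))
          (C1.mul ∘ₗ TensorProduct.map C1.antipode (i ∘ₗ γ)) ∘ₗ
          TensorProduct.map C1.comul C1.comul
        = TensorProduct.map
            (C1.mul ∘ₗ TensorProduct.map C1.antipode (i ∘ₗ γ) ∘ₗ C1.comul)
            (C1.mul ∘ₗ TensorProduct.map C1.antipode (i ∘ₗ γ) ∘ₗ C1.comul) := by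
      rw [← TensorProduct.map_comp]
      simp only [LinearMap.comp_assoc]
    have m2' := congrArg (fun q => q ∘ₗ C1.comul) m2
    simp only [LinearMap.comp_assoc] at m2'
    rw [m2']
  have hγT : γ ∘ₗ T = LinearMap.smulRight C1.counit C0.one := by
    rw [hT]
    have g1 := congrArg
      (fun q => q ∘ₗ (TensorProduct.map C1.antipode (i ∘ₗ γ) ∘ₗ C1.comul))
      (C1.hom_mul' C0 hγ)
    simp only [LinearMap.comp_assoc] at g1 ⊢
    rw [← g1]
    have g2 : TensorProduct.map γ γ ∘ₗ TensorProduct.map C1.antipode (i ∘ₗ γ)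
        = TensorProduct.map C0.antipode LinearMap.id ∘ₗ TensorProduct.map γ γ := by
      rw [← TensorProduct.map_comp, hγS, hγj, ← TensorProduct.map_comp,
        LinearMap.id_comp]
    have g2' := congrArg (fun q => q ∘ₗ C1.comul) g2
    simp only [LinearMap.comp_assoc] at g2'
    rw [g2', ← hγ.map_comul]
    have AL := congrArg (fun q => q ∘ₗ γ) C0.antipode_left'
    simp only [LinearMap.comp_assoc] at AL
    rw [AL, smulRight_comp', hγ.map_counit]
  have MAIN : (TensorProduct.map LinearMap.id γ ∘ₗ C1.comul) ∘ₗ T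
      = ((TensorProduct.mk k A1 A0).flip C0.one) ∘ₗ T := by
    rw [LinearMap.comp_assoc, hTco, ← LinearMap.comp_assoc,
      ← TensorProduct.map_comp, LinearMap.id_comp, hγT,
      C1.map_smulRight_comul T C0.one]
  simp only [ColorHopfAlg.hkerOf, LinearMap.mem_ker, LinearMap.sub_apply]
  rw [sub_eq_zero]
  have hM := LinearMap.congr_fun MAIN x
  simpa using hM


end Statements

end ColorHopfPaper
end

section
/- Let (A, H, d) be a color Hopf crossed module and ℋ the simplicial cocommutative color Hopf algebra obtained by applying the 2-coskeleton functor to the 2-truncated simplicial object with H₀ = A, H₁ = H ⋊ A, H₂ = H ⋊_* (H ⋊ A) (where (h⊗a) * h' := (d(h)a)·h'), and the standard face and degeneracy maps. Then the Moore complex of ℋ has length one: M(ℋ)₂ = Hker(d²₀) ∩ Hker(d²₁) = k·(1⊗1⊗1) and M(ℋ)ᵢ ≅ k for all i ≥ 2, while M(ℋ)₁ = Hker(d¹₀) ≅ H and M(ℋ)₀ = A. -/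
open TensorProduct

namespace ColorHopfPaper

variable (k : Type*) [Field k] (G : Type*) [CommGroup G]

section Statements

variable {k G}

variable {A H : Type*} [AddCommGroup A] [Module k A] [AddCommGroup H] [Module k H]
variable {CA : ColorHopfAlg k G A} {CH : ColorHopfAlg k G H}

/-- The braiding `c_{H, H⋊A} : H ⊗ (H ⋊ A) → (H ⋊ A) ⊗ H`. -/
noncomputable def cHX1 (M : ColorCrossedMod k G CA CH) : H ⊗[k] (H ⊗[k] A) →ₗ[k] (H ⊗[k] A) ⊗[k] H :=
  (TensorProduct.assoc k H A H).symm.toLinearMap ∘ₗ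
  (TensorProduct.map LinearMap.id M.cHA) ∘ₗ
  (TensorProduct.assoc k H H A).toLinearMap ∘ₗ
  (TensorProduct.map CH.braid LinearMap.id) ∘ₗ
  (TensorProduct.assoc k H H A).symm.toLinearMap

/-- The comultiplication of `H₂ = H ⋊ (H ⋊ A)`. -/
noncomputable def comulX2 (M : ColorCrossedMod k G CA CH) :
    H ⊗[k] (H ⊗[k] A) →ₗ[k] (H ⊗[k] (H ⊗[k] A)) ⊗[k] (H ⊗[k] (H ⊗[k] A)) :=
  midMap k (cHX1 M) ∘ₗ TensorProduct.map CH.comul M.smashComul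

/-- The face `d²₀(h ⊗ h' ⊗ a) = ε(h) h' ⊗ a`. -/
noncomputable def d20 (M : ColorCrossedMod k G CA CH) : H ⊗[k] (H ⊗[k] A) →ₗ[k] H ⊗[k] A :=
  (TensorProduct.lid k (H ⊗[k] A)).toLinearMap ∘ₗ
    TensorProduct.map CH.counit LinearMap.id

/-- The face `d²₁(h ⊗ h' ⊗ a) = hh' ⊗ a`. -/
noncomputable def d21 (M : ColorCrossedMod k G CA CH) : H ⊗[k] (H ⊗[k] A) →ₗ[k] H ⊗[k] A :=
  (TensorProduct.map CH.mul LinearMap.id) ∘ₗ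
    (TensorProduct.assoc k H H A).symm.toLinearMap

/-- The face `d¹₀(h ⊗ a) = ε(h) a`. -/
noncomputable def d10 (M : ColorCrossedMod k G CA CH) : H ⊗[k] A →ₗ[k] A :=
  (TensorProduct.lid k A).toLinearMap ∘ₗ TensorProduct.map CH.counit LinearMap.id

namespace MooreAux

/-! ### Generic helpers -/

lemma midMap_tmul {A' B' : Type*} [AddCommGroup A'] [Module k A']
    [AddCommGroup B'] [Module k B'] (c : A' ⊗[k] B' →ₗ[k] B' ⊗[k] A')
    (x1 x2 : A') (y1 y2 : B') :
    midMap k c ((x1 ⊗ₜ[k] x2) ⊗ₜ[k] (y1 ⊗ₜ[k] y2)) =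
      TensorProduct.map (TensorProduct.mk k A' B' x1)
        ((TensorProduct.mk k A' B').flip y2) (c (x2 ⊗ₜ[k] y1)) := by
  simp only [midMap, LinearMap.coe_comp, LinearEquiv.coe_coe, Function.comp_apply,
    assoc_tmul, map_tmul, LinearMap.id_coe, id_eq, assoc_symm_tmul]
  generalize c (x2 ⊗ₜ[k] y1) = w
  induction w using TensorProduct.induction_on with
  | zero => simp
  | tmul u v => simp [assoc_tmul, assoc_symm_tmul]
  | add p q hp hq => simp only [add_tmul, tmul_add, map_add, hp, hq]

lemma homog_induction {W : Type*} [AddCommGroup W] [Module k W]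
    (C : ColorHopfAlg k G W) {p : W → Prop}
    (h0 : p 0) (hadd : ∀ x y, p x → p y → p (x + y))
    (hhom : ∀ (g : G) (x : W), x ∈ C.grade g → p x) (x : W) : p x := by
  have hx : x ∈ ⨆ g, C.grade g := by rw [C.grade_top]; trivial
  exact Submodule.iSup_induction (motive := p) (fun g => C.grade g) hx hhom h0 hadd

lemma phi_one_right {W : Type*} [AddCommGroup W] [Module k W]
    (C : ColorHopfAlg k G W) (g : G) : C.φ g 1 = 1 := by
  have h := C.φ_mul_right g 1 1
  rw [mul_one] at h
  have hne := C.φ_ne g 1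
  have : C.φ g 1 * 1 = C.φ g 1 * C.φ g 1 := by rw [mul_one, ← h]
  exact (mul_left_cancel₀ hne this).symm

lemma phi_one_left {W : Type*} [AddCommGroup W] [Module k W]
    (C : ColorHopfAlg k G W) (g : G) : C.φ 1 g = 1 := by
  have h := C.φ_mul_left 1 1 g
  rw [one_mul] at h
  have hne := C.φ_ne 1 g
  have : C.φ 1 g * 1 = C.φ 1 g * C.φ 1 g := by rw [mul_one, ← h]
  exact (mul_left_cancel₀ hne this).symm

variable (M : ColorCrossedMod k G CA CH)

lemma cHA_one (x : H) : M.cHA (x ⊗ₜ[k] CA.one) = CA.one ⊗ₜ[k] x := by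
  refine homog_induction (p := fun x => M.cHA (x ⊗ₜ[k] CA.one) = CA.one ⊗ₜ[k] x) CH ?_ ?_ ?_ x
  · simp
  · intro a b ha hb; rw [add_tmul, map_add, ha, hb, tmul_add]
  · intro g y hy
    rw [M.cHA_apply g 1 y CA.one hy CA.one_mem, M.φ_eq, phi_one_right, one_smul]

lemma braid_one (x : H) : CH.braid (x ⊗ₜ[k] CH.one) = CH.one ⊗ₜ[k] x := by
  refine homog_induction (p := fun x => CH.braid (x ⊗ₜ[k] CH.one) = CH.one ⊗ₜ[k] x) CH ?_ ?_ ?_ x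
  · simp
  · intro a b ha hb; rw [add_tmul, map_add, ha, hb, tmul_add]
  · intro g y hy
    rw [CH.braid_apply g 1 y CH.one hy CH.one_mem, phi_one_right, one_smul]

lemma op1 (t : A ⊗[k] A) (x : H) :
    M.act ((TensorProduct.map LinearMap.id M.act) ((TensorProduct.assoc k A A H) (t ⊗ₜ[k] x))) =
      M.act (CA.mul t ⊗ₜ[k] x) := by
  induction t using TensorProduct.induction_on with
  | zero => simp
  | tmul a b =>
      simp only [assoc_tmul, map_tmul, LinearMap.id_coe, id_eq]
      exact M.act_act a b x
  | add p q hp hq => simp only [map_add, add_tmul, hp, hq]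

/-- `Lc (a ⊗ x) = φ(|a|,|x|) ε(a) x`, built from `cAH`. -/
noncomputable def Lc : A ⊗[k] H →ₗ[k] H :=
  (TensorProduct.rid k H).toLinearMap ∘ₗ
    (TensorProduct.map LinearMap.id CA.counit) ∘ₗ M.cAH

lemma ph1 (x : H) (t : A ⊗[k] A) :
    CH.mul ((TensorProduct.map M.act M.act) (midMap k M.cAH (t ⊗ₜ[k] (x ⊗ₜ[k] CH.one)))) =
      M.act ((TensorProduct.map LinearMap.id (Lc M)) ((TensorProduct.assoc k A A H) (t ⊗ₜ[k] x))) := by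
  induction t using TensorProduct.induction_on with
  | zero => simp
  | tmul a1 a2 =>
      rw [midMap_tmul]
      simp only [assoc_tmul, map_tmul, LinearMap.id_coe, id_eq, Lc, LinearMap.coe_comp,
        LinearEquiv.coe_coe, Function.comp_apply]
      generalize M.cAH (a2 ⊗ₜ[k] x) = w
      induction w using TensorProduct.induction_on with
      | zero => simp
      | tmul u v =>
          simp only [map_tmul, TensorProduct.mk_apply, LinearMap.flip_apply,
            LinearMap.id_coe, id_eq, rid_tmul, M.act_one, tmul_smul, map_smul,
            CH.mul_one']
      | add p q hp hq => simp only [map_add, tmul_add, hp, hq]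
  | add p q hp hq => simp only [add_tmul, map_add, hp, hq]

lemma p_lemma (a : A) (x : H) :
    M.act (a ⊗ₜ[k] x) =
      M.act ((TensorProduct.map LinearMap.id (Lc M))
        ((TensorProduct.assoc k A A H) (CA.comul a ⊗ₜ[k] x))) := by
  have h := LinearMap.congr_fun M.act_mul (a ⊗ₜ[k] (x ⊗ₜ[k] CH.one))
  simp only [LinearMap.coe_comp, Function.comp_apply, map_tmul, LinearMap.id_coe, id_eq] at h
  rw [CH.mul_one'] at h
  rw [h, ph1]

lemma antipode_collapse (a : A) (z : H) :
    M.act ((TensorProduct.map LinearMap.id M.act) ((TensorProduct.assoc k A A H)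
      (((TensorProduct.map CA.antipode LinearMap.id) (CA.comul a)) ⊗ₜ[k] z))) =
      CA.counit a • z := by
  rw [op1, CA.antipode_left]
  rw [← TensorProduct.smul_tmul', map_smul, M.act_one_left]

/-- `a ↦ Lc (a ⊗ x)`. -/
noncomputable def Lcx (x : H) : A →ₗ[k] H := Lc M ∘ₗ (TensorProduct.mk k A H).flip x

/-- `a ⊗ h ↦ a · (Lcx h)`-style composite. -/
noncomputable def uMap (x : H) : A ⊗[k] A →ₗ[k] H :=
  M.act ∘ₗ TensorProduct.map LinearMap.id (Lcx M x)

lemma sl_a (x : H) (s : A ⊗[k] A) :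
    (TensorProduct.map LinearMap.id (Lc M)) ((TensorProduct.assoc k A A H) (s ⊗ₜ[k] x)) =
      (TensorProduct.map LinearMap.id (Lcx M x)) s := by
  induction s using TensorProduct.induction_on with
  | zero => simp
  | tmul a b =>
      simp [assoc_tmul, map_tmul, Lcx, TensorProduct.mk_apply]
  | add p q hp hq => simp only [add_tmul, map_add, hp, hq]

lemma w2a (x : H) (t : A ⊗[k] A) :
    M.act ((TensorProduct.map LinearMap.id M.act) ((TensorProduct.assoc k A A H)
      (((TensorProduct.map CA.antipode LinearMap.id) t) ⊗ₜ[k] x))) =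
    M.act ((TensorProduct.map CA.antipode (uMap M x))
      ((TensorProduct.map LinearMap.id CA.comul) t)) := by
  induction t using TensorProduct.induction_on with
  | zero => simp
  | tmul b c =>
      simp only [map_tmul, assoc_tmul, LinearMap.id_coe, id_eq, uMap,
        LinearMap.coe_comp, Function.comp_apply]
      rw [p_lemma M c x, sl_a]
  | add p q hp hq => simp only [map_add, add_tmul, hp, hq]

lemma w2bridge (x : H) (c : A) (s : A ⊗[k] A) :
    (TensorProduct.map CA.antipode (uMap M x)) ((TensorProduct.assoc k A A A) (s ⊗ₜ[k] c)) =
      (TensorProduct.map LinearMap.id M.act) ((TensorProduct.assoc k A A H)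
        (((TensorProduct.map CA.antipode LinearMap.id) s) ⊗ₜ[k] (Lcx M x c))) := by
  induction s using TensorProduct.induction_on with
  | zero => simp
  | tmul b1 b2 =>
      simp [assoc_tmul, map_tmul, uMap, TensorProduct.mk_apply]
  | add p q hp hq => simp only [add_tmul, map_add, hp, hq]

lemma w2c (x : H) (t : A ⊗[k] A) :
    M.act ((TensorProduct.map CA.antipode (uMap M x))
      ((TensorProduct.assoc k A A A) ((TensorProduct.map CA.comul LinearMap.id) t))) =
    Lcx M x ((TensorProduct.lid k A) ((TensorProduct.map CA.counit LinearMap.id) t)) := by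
  induction t using TensorProduct.induction_on with
  | zero => simp
  | tmul b c =>
      simp only [map_tmul, LinearMap.id_coe, id_eq]
      rw [w2bridge, antipode_collapse]
      simp [lid_tmul]
  | add p q hp hq => simp only [map_add, add_tmul, hp, hq]

lemma ml1 (a : A) (x : H) : Lc M (a ⊗ₜ[k] x) = CA.counit a • x := by
  have h1 := antipode_collapse M a x
  rw [w2a] at h1
  have hco := LinearMap.congr_fun CA.coassoc a
  simp only [LinearMap.coe_comp, Function.comp_apply, LinearEquiv.coe_coe] at hco
  rw [← hco, w2c, CA.counit_left] at h1
  simpa [Lcx] using h1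

lemma phi_one_of (M : ColorCrossedMod k G CA CH) {γ δ : G} {x : H} {a : A}
    (hx : x ∈ CH.grade γ) (ha : a ∈ CA.grade δ)
    (hax : CA.counit a ≠ 0) (hx0 : x ≠ 0) : CA.φ δ γ = 1 := by
  have h := ml1 M a x
  simp only [Lc, LinearMap.coe_comp, LinearEquiv.coe_coe, Function.comp_apply] at h
  rw [M.cAH_apply δ γ a x ha hx] at h
  simp only [map_smul, map_tmul, LinearMap.id_coe, id_eq, rid_tmul, smul_smul] at h
  have h3 : CA.φ δ γ * CA.counit a - CA.counit a = 0 ∨ x = 0 :=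
    smul_eq_zero.mp (by rw [sub_smul, h, sub_self])
  rcases h3 with h3 | h3
  · have h4 : CA.φ δ γ * CA.counit a = CA.counit a := sub_eq_zero.mp h3
    exact mul_right_cancel₀ hax (by rw [h4, one_mul])
  · exact absurd h3 hx0

lemma phi_one_of' (M : ColorCrossedMod k G CA CH) {γ δ : G} {x : H} {a : A}
    (hx : x ∈ CH.grade γ) (ha : a ∈ CA.grade δ)
    (hax : CA.counit a ≠ 0) (hx0 : x ≠ 0) : CA.φ γ δ = 1 := by
  have h1 := phi_one_of M hx ha hax hx0
  have h2 := CA.φ_skew γ δ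
  rw [h1, mul_one] at h2
  exact h2

lemma vl1 (x : H) (a : A) :
    (TensorProduct.lid k H) ((TensorProduct.map CA.counit LinearMap.id) (M.cHA (x ⊗ₜ[k] a))) =
      CA.counit a • x := by
  refine homog_induction (p := fun x => ∀ a : A,
    (TensorProduct.lid k H) ((TensorProduct.map CA.counit LinearMap.id) (M.cHA (x ⊗ₜ[k] a))) =
      CA.counit a • x) CH ?_ ?_ ?_ x a
  · intro a; simp
  · intro y z hy hz a
    simp only [add_tmul, map_add, hy a, hz a, smul_add]
  · intro γ y hyγ
    refine homog_induction (p := fun a : A =>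
      (TensorProduct.lid k H) ((TensorProduct.map CA.counit LinearMap.id) (M.cHA (y ⊗ₜ[k] a))) =
        CA.counit a • y) CA ?_ ?_ ?_
    · simp
    · intro b c hb hc
      simp only [tmul_add, map_add, hb, hc, add_smul]
    · intro δ b hbδ
      rw [M.cHA_apply γ δ y b hyγ hbδ, M.φ_eq]
      simp only [map_smul, map_tmul, LinearMap.id_coe, id_eq, lid_tmul, smul_smul]
      by_cases hb0 : CA.counit b = 0
      · simp [hb0]
      by_cases hy0 : y = 0
      · simp [hy0]
      rw [phi_one_of' M hyγ hbδ hb0 hy0, one_mul]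

lemma eps_lid (w : A ⊗[k] H) :
    CH.counit ((TensorProduct.lid k H) ((TensorProduct.map CA.counit LinearMap.id) w)) =
      (TensorProduct.lid k k) ((TensorProduct.map CA.counit CH.counit) w) := by
  induction w using TensorProduct.induction_on with
  | zero => simp
  | tmul b y => simp [smul_eq_mul]
  | add p q hp hq => simp only [map_add, hp, hq]

lemma sl1 (x : H) (a : A) :
    (TensorProduct.lid k k) ((TensorProduct.map CA.counit CH.counit) (M.cHA (x ⊗ₜ[k] a))) =
      CH.counit x * CA.counit a := by
  rw [← eps_lid, vl1]
  simp [smul_eq_mul, mul_comm]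

lemma eps2_eq (t : H ⊗[k] H) :
    (TensorProduct.lid k k) ((TensorProduct.map CH.counit CH.counit) t) =
      CH.counit ((TensorProduct.rid k H) ((TensorProduct.map LinearMap.id CH.counit) t)) := by
  induction t using TensorProduct.induction_on with
  | zero => simp
  | tmul u v => simp [smul_eq_mul, mul_comm]
  | add p q hp hq => simp only [map_add, hp, hq]

lemma inner_mu (x1 y2 : H) (w : H ⊗[k] H) :
    (TensorProduct.lid k k) ((TensorProduct.map CH.counit CH.counit) ((TensorProduct.map CH.mul CH.mul)
      ((TensorProduct.map (TensorProduct.mk k H H x1) ((TensorProduct.mk k H H).flip y2)) w))) =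
      (CH.counit x1 * CH.counit y2) *
        ((TensorProduct.lid k k) ((TensorProduct.map CH.counit CH.counit) w)) := by
  induction w using TensorProduct.induction_on with
  | zero => simp
  | tmul u v =>
      simp only [map_tmul, TensorProduct.mk_apply, LinearMap.flip_apply, lid_tmul,
        CH.counit_mul, smul_eq_mul]
      ring
  | add p q hp hq => simp only [map_add, hp, hq]; ring

lemma phiH (x y : H) :
    (TensorProduct.lid k k) ((TensorProduct.map CH.counit CH.counit) (CH.braid (x ⊗ₜ[k] y))) =
      CH.counit x * CH.counit y := by
  have key := LinearMap.congr_fun CH.comul_mul (x ⊗ₜ[k] y)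
  simp only [LinearMap.coe_comp, Function.comp_apply, map_tmul] at key
  have lhs : (TensorProduct.lid k k) ((TensorProduct.map CH.counit CH.counit)
      (CH.comul (CH.mul (x ⊗ₜ[k] y)))) = CH.counit x * CH.counit y := by
    rw [eps2_eq, CH.counit_right, CH.counit_mul]
  have rhs : ∀ (t s : H ⊗[k] H),
      (TensorProduct.lid k k) ((TensorProduct.map CH.counit CH.counit)
        ((TensorProduct.map CH.mul CH.mul) (midMap k CH.braid (t ⊗ₜ[k] s)))) =
      (TensorProduct.lid k k) ((TensorProduct.map CH.counit CH.counit)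
        (CH.braid (((TensorProduct.lid k H) ((TensorProduct.map CH.counit LinearMap.id) t)) ⊗ₜ[k]
          ((TensorProduct.rid k H) ((TensorProduct.map LinearMap.id CH.counit) s))))) := by
    intro t s
    induction t using TensorProduct.induction_on with
    | zero => simp
    | tmul x1 x2 =>
        induction s using TensorProduct.induction_on with
        | zero => simp
        | tmul y1 y2 =>
            rw [midMap_tmul, inner_mu]
            simp only [map_tmul, LinearMap.id_coe, id_eq, lid_tmul, rid_tmul]
            rw [← TensorProduct.smul_tmul', TensorProduct.tmul_smul]
            simp only [map_smul, smul_eq_mul, smul_smul]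
            try ring
        | add p q hp hq =>
            simp only [tmul_add, map_add, hp, hq, add_tmul]
    | add p q hp hq =>
        simp only [add_tmul, map_add, hp, hq, tmul_add]
  rw [key] at lhs
  rw [rhs (CH.comul x) (CH.comul y), CH.counit_left, CH.counit_right] at lhs
  exact lhs

lemma smashCounit_tmul (h : H) (a : A) :
    M.smashCounit (h ⊗ₜ[k] a) = CH.counit h * CA.counit a := by
  simp [ColorCrossedMod.smashCounit, smul_eq_mul]

lemma sl2c (u : H) (w : A ⊗[k] H) :
    (TensorProduct.lid k k) ((TensorProduct.map M.smashCounit CH.counit)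
      ((TensorProduct.assoc k H A H).symm (u ⊗ₜ[k] w))) =
      CH.counit u * ((TensorProduct.lid k k) ((TensorProduct.map CA.counit CH.counit) w)) := by
  induction w using TensorProduct.induction_on with
  | zero => simp
  | tmul b h2 =>
      simp only [assoc_symm_tmul, map_tmul, lid_tmul, smashCounit_tmul, smul_eq_mul]
      ring
  | add p q hp hq => simp only [tmul_add, map_add, hp, hq, mul_add]

lemma sl2b (a : A) (β : H ⊗[k] H) :
    (TensorProduct.lid k k) ((TensorProduct.map M.smashCounit CH.counit)
      ((TensorProduct.assoc k H A H).symm ((TensorProduct.map LinearMap.id M.cHA)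
        ((TensorProduct.assoc k H H A) (β ⊗ₜ[k] a))))) =
      ((TensorProduct.lid k k) ((TensorProduct.map CH.counit CH.counit) β)) * CA.counit a := by
  induction β using TensorProduct.induction_on with
  | zero => simp
  | tmul u v =>
      simp only [assoc_tmul, map_tmul, LinearMap.id_coe, id_eq]
      rw [sl2c, sl1]
      simp only [map_tmul, lid_tmul, smul_eq_mul]
      ring
  | add p q hp hq =>
      simp only [add_tmul, map_add, hp, hq]
      ring

lemma sl2w (q' : H) (w : H ⊗[k] A) :
    (TensorProduct.lid k k) ((TensorProduct.map M.smashCounit CH.counit) (cHX1 M (q' ⊗ₜ[k] w))) =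
      CH.counit q' * M.smashCounit w := by
  induction w using TensorProduct.induction_on with
  | zero => simp
  | tmul h' a =>
      simp only [cHX1, LinearMap.coe_comp, Function.comp_apply, LinearEquiv.coe_coe,
        assoc_symm_tmul, map_tmul, LinearMap.id_coe, id_eq]
      rw [sl2b, phiH, smashCounit_tmul]
      ring
  | add p q hp hq => simp only [tmul_add, map_add, hp, hq, mul_add]

lemma lx1inner (p : H) (c : A) (w' : A ⊗[k] H) :
    (TensorProduct.lid k (H ⊗[k] A)) ((TensorProduct.map M.smashCounit LinearMap.id)
      ((TensorProduct.map (TensorProduct.mk k H A p) ((TensorProduct.mk k H A).flip c)) w')) =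
      CH.counit p • (((TensorProduct.lid k H) ((TensorProduct.map CA.counit LinearMap.id) w')) ⊗ₜ[k] c) := by
  induction w' using TensorProduct.induction_on with
  | zero => simp
  | tmul u v =>
      simp only [map_tmul, TensorProduct.mk_apply, LinearMap.flip_apply, LinearMap.id_coe,
        id_eq, lid_tmul, smashCounit_tmul, smul_eq_mul]
      rw [← TensorProduct.smul_tmul', smul_smul]
  | add p' q' hp hq =>
      simp only [map_add, hp, hq, add_tmul, smul_add]

lemma lx1a (t : H ⊗[k] H) (s : A ⊗[k] A) :
    (TensorProduct.lid k (H ⊗[k] A)) ((TensorProduct.map M.smashCounit LinearMap.id)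
      (midMap k M.cHA (t ⊗ₜ[k] s))) =
      ((TensorProduct.lid k H) ((TensorProduct.map CH.counit LinearMap.id) t)) ⊗ₜ[k]
        ((TensorProduct.lid k A) ((TensorProduct.map CA.counit LinearMap.id) s)) := by
  induction t using TensorProduct.induction_on with
  | zero => simp
  | tmul p q =>
      induction s using TensorProduct.induction_on with
      | zero => simp
      | tmul b c =>
          rw [midMap_tmul, lx1inner, vl1]
          simp only [map_tmul, lid_tmul, LinearMap.id_coe, id_eq,
            TensorProduct.smul_tmul', TensorProduct.tmul_smul, smul_smul]
          rw [mul_comm]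
      | add p' q' hp hq =>
          simp only [tmul_add, map_add, hp, hq]
  | add p' q' hp hq =>
      simp only [add_tmul, map_add, hp, hq]

lemma lx1 (w : H ⊗[k] A) :
    (TensorProduct.lid k (H ⊗[k] A)) ((TensorProduct.map M.smashCounit LinearMap.id)
      (M.smashComul w)) = w := by
  induction w using TensorProduct.induction_on with
  | zero => simp
  | tmul h a =>
      simp only [ColorCrossedMod.smashComul, LinearMap.coe_comp, Function.comp_apply, map_tmul]
      rw [lx1a, CH.counit_left, CA.counit_left]
  | add p q hp hq => simp only [map_add, hp, hq]

/-- `h ⊗ a ↦ ε(a) h`. -/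
noncomputable def q1M (_M : ColorCrossedMod k G CA CH) : H ⊗[k] A →ₗ[k] H :=
  (TensorProduct.rid k H).toLinearMap ∘ₗ TensorProduct.map LinearMap.id CA.counit

lemma p2inner (p : H) (c : A) (w' : A ⊗[k] H) :
    (TensorProduct.map (q1M M) LinearMap.id) ((TensorProduct.map LinearMap.id (d10 M))
      ((TensorProduct.map (TensorProduct.mk k H A p) ((TensorProduct.mk k H A).flip c)) w')) =
      ((TensorProduct.lid k k) ((TensorProduct.map CA.counit CH.counit) w')) • (p ⊗ₜ[k] c) := by
  induction w' using TensorProduct.induction_on with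
  | zero => simp
  | tmul u v =>
      simp only [map_tmul, TensorProduct.mk_apply, LinearMap.flip_apply, LinearMap.id_coe,
        id_eq, d10, q1M, LinearMap.coe_comp, LinearEquiv.coe_coe, Function.comp_apply,
        lid_tmul, rid_tmul, smul_eq_mul, TensorProduct.smul_tmul', TensorProduct.tmul_smul,
        smul_smul]
  | add p' q' hp hq => simp only [map_add, hp, hq, add_smul]

lemma p2a (t : H ⊗[k] H) (s : A ⊗[k] A) :
    (TensorProduct.map (q1M M) LinearMap.id) ((TensorProduct.map LinearMap.id (d10 M))
      (midMap k M.cHA (t ⊗ₜ[k] s))) =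
      ((TensorProduct.rid k H) ((TensorProduct.map LinearMap.id CH.counit) t)) ⊗ₜ[k]
        ((TensorProduct.lid k A) ((TensorProduct.map CA.counit LinearMap.id) s)) := by
  induction t using TensorProduct.induction_on with
  | zero => simp
  | tmul p q =>
      induction s using TensorProduct.induction_on with
      | zero => simp
      | tmul b c =>
          rw [midMap_tmul, p2inner, sl1]
          simp only [map_tmul, rid_tmul, lid_tmul, LinearMap.id_coe, id_eq,
            TensorProduct.smul_tmul', TensorProduct.tmul_smul, smul_smul]
          rw [mul_comm]
      | add p' q' hp hq => simp only [tmul_add, map_add, hp, hq]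
  | add p' q' hp hq => simp only [add_tmul, map_add, hp, hq]

lemma p2 (z : H ⊗[k] A) :
    (TensorProduct.map (q1M M) LinearMap.id) ((TensorProduct.map LinearMap.id (d10 M))
      (M.smashComul z)) = z := by
  induction z using TensorProduct.induction_on with
  | zero => simp
  | tmul h a =>
      simp only [ColorCrossedMod.smashComul, LinearMap.coe_comp, Function.comp_apply, map_tmul]
      rw [p2a, CH.counit_right, CA.counit_left]
  | add p q hp hq => simp only [map_add, hp, hq]

lemma p1a (t : H ⊗[k] H) :
    (TensorProduct.map LinearMap.id (d10 M)) (midMap k M.cHA (t ⊗ₜ[k] (CA.one ⊗ₜ[k] CA.one))) =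
      (((TensorProduct.rid k H) ((TensorProduct.map LinearMap.id CH.counit) t)) ⊗ₜ[k] CA.one)
        ⊗ₜ[k] CA.one := by
  induction t using TensorProduct.induction_on with
  | zero => simp
  | tmul p q =>
      rw [midMap_tmul, cHA_one]
      simp only [map_tmul, TensorProduct.mk_apply, LinearMap.flip_apply, LinearMap.id_coe,
        id_eq, d10, LinearMap.coe_comp, LinearEquiv.coe_coe, Function.comp_apply, lid_tmul,
        rid_tmul, TensorProduct.smul_tmul', TensorProduct.tmul_smul]
  | add p' q' hp hq => simp only [add_tmul, map_add, hp, hq]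

lemma p1 (h : H) :
    (TensorProduct.map LinearMap.id (d10 M)) (M.smashComul (h ⊗ₜ[k] CA.one)) =
      (h ⊗ₜ[k] CA.one) ⊗ₜ[k] CA.one := by
  simp only [ColorCrossedMod.smashComul, LinearMap.coe_comp, Function.comp_apply, map_tmul,
    CA.comul_one]
  rw [p1a, CH.counit_right]

lemma smashComul_one :
    M.smashComul (CH.one ⊗ₜ[k] CA.one) =
      (CH.one ⊗ₜ[k] CA.one) ⊗ₜ[k] (CH.one ⊗ₜ[k] CA.one) := by
  simp only [ColorCrossedMod.smashComul, LinearMap.coe_comp, Function.comp_apply, map_tmul,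
    CH.comul_one, CA.comul_one]
  rw [midMap_tmul, cHA_one]
  simp [TensorProduct.mk_apply]

lemma cHX1_one (q' : H) :
    cHX1 M (q' ⊗ₜ[k] (CH.one ⊗ₜ[k] CA.one)) = (CH.one ⊗ₜ[k] CA.one) ⊗ₜ[k] q' := by
  simp only [cHX1, LinearMap.coe_comp, Function.comp_apply, LinearEquiv.coe_coe,
    assoc_symm_tmul, map_tmul, LinearMap.id_coe, id_eq]
  rw [braid_one]
  simp only [assoc_tmul, map_tmul, LinearMap.id_coe, id_eq]
  rw [cHA_one]
  simp only [assoc_symm_tmul]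

/-- `h ↦ h ⊗ (1 ⊗ 1)`. -/
noncomputable def rhoM (_M : ColorCrossedMod k G CA CH) : H →ₗ[k] H ⊗[k] (H ⊗[k] A) :=
  (TensorProduct.mk k H (H ⊗[k] A)).flip (CH.one ⊗ₜ[k] CA.one)

/-- `h ↦ h ⊗ 1`. -/
noncomputable def nuM (_M : ColorCrossedMod k G CA CH) : H →ₗ[k] H ⊗[k] A :=
  (TensorProduct.mk k H A).flip CA.one

lemma comulX2_rho0 (t : H ⊗[k] H) :
    midMap k (cHX1 M) (t ⊗ₜ[k] ((CH.one ⊗ₜ[k] CA.one) ⊗ₜ[k] (CH.one ⊗ₜ[k] CA.one))) =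
      (TensorProduct.map (rhoM M) (rhoM M)) t := by
  induction t using TensorProduct.induction_on with
  | zero => simp
  | tmul p q =>
      rw [midMap_tmul, cHX1_one]
      simp [rhoM, TensorProduct.mk_apply]
  | add p' q' hp hq => simp only [add_tmul, map_add, hp, hq]

lemma comulX2_rho (h : H) :
    comulX2 M (h ⊗ₜ[k] (CH.one ⊗ₜ[k] CA.one)) =
      (TensorProduct.map (rhoM M) (rhoM M)) (CH.comul h) := by
  simp only [comulX2, LinearMap.coe_comp, Function.comp_apply, map_tmul]
  rw [smashComul_one, comulX2_rho0]

/-- `h ⊗ w ↦ ε_{X1}(w) h`. -/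
noncomputable def q2M : H ⊗[k] (H ⊗[k] A) →ₗ[k] H :=
  (TensorProduct.rid k H).toLinearMap ∘ₗ TensorProduct.map LinearMap.id M.smashCounit

lemma sainner (p : H) (w2 : H ⊗[k] A) (ω : (H ⊗[k] A) ⊗[k] H) :
    (TensorProduct.map (q2M M) LinearMap.id) ((TensorProduct.map LinearMap.id (d20 M))
      ((TensorProduct.map (TensorProduct.mk k H (H ⊗[k] A) p)
        ((TensorProduct.mk k H (H ⊗[k] A)).flip w2)) ω)) =
      ((TensorProduct.lid k k) ((TensorProduct.map M.smashCounit CH.counit) ω)) •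
        (p ⊗ₜ[k] w2) := by
  induction ω using TensorProduct.induction_on with
  | zero => simp
  | tmul w' h' =>
      simp only [map_tmul, TensorProduct.mk_apply, LinearMap.flip_apply, LinearMap.id_coe,
        id_eq, d20, q2M, LinearMap.coe_comp, LinearEquiv.coe_coe, Function.comp_apply,
        lid_tmul, rid_tmul, smul_eq_mul, TensorProduct.smul_tmul', TensorProduct.tmul_smul,
        smul_smul]
  | add p' q' hp hq => simp only [map_add, hp, hq, add_smul]

lemma saa (t : H ⊗[k] H) (s : (H ⊗[k] A) ⊗[k] (H ⊗[k] A)) :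
    (TensorProduct.map (q2M M) LinearMap.id) ((TensorProduct.map LinearMap.id (d20 M))
      (midMap k (cHX1 M) (t ⊗ₜ[k] s))) =
      ((TensorProduct.rid k H) ((TensorProduct.map LinearMap.id CH.counit) t)) ⊗ₜ[k]
        ((TensorProduct.lid k (H ⊗[k] A))
          ((TensorProduct.map M.smashCounit LinearMap.id) s)) := by
  induction t using TensorProduct.induction_on with
  | zero => simp
  | tmul p q =>
      induction s using TensorProduct.induction_on with
      | zero => simp
      | tmul w1 w2 =>
          rw [midMap_tmul, sainner, sl2w]
          simp only [map_tmul, rid_tmul, lid_tmul, LinearMap.id_coe, id_eq,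
            TensorProduct.smul_tmul', TensorProduct.tmul_smul, smul_smul]
          rw [mul_comm]
      | add p' q' hp hq => simp only [tmul_add, map_add, hp, hq]
  | add p' q' hp hq => simp only [add_tmul, map_add, hp, hq]

lemma sa (z : H ⊗[k] (H ⊗[k] A)) :
    (TensorProduct.map (q2M M) LinearMap.id) ((TensorProduct.map LinearMap.id (d20 M))
      (comulX2 M z)) = z := by
  induction z using TensorProduct.induction_on with
  | zero => simp
  | tmul h w =>
      simp only [comulX2, LinearMap.coe_comp, Function.comp_apply, map_tmul]
      rw [saa, CH.counit_right, lx1]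
  | add p q hp hq => simp only [map_add, hp, hq]

lemma sb (t : H ⊗[k] H) :
    (TensorProduct.map LinearMap.id (d21 M))
      (midMap k (cHX1 M) (t ⊗ₜ[k] ((CH.one ⊗ₜ[k] CA.one) ⊗ₜ[k] (CH.one ⊗ₜ[k] CA.one)))) =
      (TensorProduct.map (rhoM M) (nuM M)) t := by
  rw [comulX2_rho0]
  induction t using TensorProduct.induction_on with
  | zero => simp
  | tmul p q =>
      simp only [map_tmul, rhoM, nuM, TensorProduct.mk_apply, LinearMap.flip_apply,
        LinearMap.id_coe, id_eq, d21, LinearMap.coe_comp, LinearEquiv.coe_coe,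
        Function.comp_apply, assoc_symm_tmul, CH.mul_one']
  | add p' q' hp hq => simp only [map_add, hp, hq]

/-- `ε` of `X2`. -/
noncomputable def epsX2 : H ⊗[k] (H ⊗[k] A) →ₗ[k] k :=
  (TensorProduct.lid k k).toLinearMap ∘ₗ TensorProduct.map CH.counit M.smashCounit

/-- strip the first (X2) factor by its counit. -/
noncomputable def f5M : (H ⊗[k] (H ⊗[k] A)) ⊗[k] (H ⊗[k] A) →ₗ[k] H ⊗[k] A :=
  (TensorProduct.lid k (H ⊗[k] A)).toLinearMap ∘ₗ TensorProduct.map (epsX2 M) LinearMap.id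

lemma epsX2_rho (p : H) : epsX2 M (p ⊗ₜ[k] (CH.one ⊗ₜ[k] CA.one)) = CH.counit p := by
  simp [epsX2, smashCounit_tmul, CH.counit_one, CA.counit_one, smul_eq_mul]

lemma sbb (t : H ⊗[k] H) :
    f5M M ((TensorProduct.map (rhoM M) (nuM M)) t) =
      nuM M ((TensorProduct.lid k H) ((TensorProduct.map CH.counit LinearMap.id) t)) := by
  induction t using TensorProduct.induction_on with
  | zero => simp
  | tmul p q =>
      simp only [map_tmul, rhoM, nuM, TensorProduct.mk_apply, LinearMap.flip_apply, f5M,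
        LinearMap.coe_comp, LinearEquiv.coe_coe, Function.comp_apply, LinearMap.id_coe, id_eq,
        lid_tmul]
      rw [epsX2_rho]
      simp [TensorProduct.smul_tmul']
  | add p' q' hp hq => simp only [map_add, hp, hq]

lemma f5rhs (x : H ⊗[k] (H ⊗[k] A)) :
    f5M M (x ⊗ₜ[k] (CH.one ⊗ₜ[k] CA.one)) = epsX2 M x • (CH.one ⊗ₜ[k] CA.one) := by
  simp [f5M]

end MooreAux

/-- in the simplicial cocommutative color Hopf algebra associated to a
color Hopf crossed module `(A, H, d)` (with `H₁ = H ⋊ A`, `H₂ = H ⋊ (H ⋊ A)`), the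
Moore complex has length one:
`M(ℋ)₁ = Hker(d¹₀) = H ⊗ k·1 ≅ H` and
`M(ℋ)₂ = Hker(d²₀) ∩ Hker(d²₁) = k·(1 ⊗ 1 ⊗ 1)`. -/
theorem moore_complex_length_one (M : ColorCrossedMod k G CA CH) :
    (hkerGen k M.smashComul (d10 M) CA.one =
      LinearMap.range ((TensorProduct.mk k H A).flip CA.one)) ∧
    (hkerGen k (comulX2 M) (d20 M) (CH.one ⊗ₜ[k] CA.one) ⊓
        hkerGen k (comulX2 M) (d21 M) (CH.one ⊗ₜ[k] CA.one) =
      Submodule.span k {CH.one ⊗ₜ[k] (CH.one ⊗ₜ[k] CA.one)}) := by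
  constructor
  · -- Part 1 : Hker(d¹₀) = H ⊗ k·1
    apply le_antisymm
    · intro x hx
      simp only [hkerGen, LinearMap.mem_ker, LinearMap.sub_apply, LinearMap.coe_comp,
        Function.comp_apply, LinearMap.flip_apply, TensorProduct.mk_apply,
        sub_eq_zero] at hx
      refine ⟨MooreAux.q1M M x, ?_⟩
      have h2 := MooreAux.p2 M x
      rw [hx] at h2
      simp only [map_tmul, LinearMap.id_coe, id_eq] at h2
      simpa [TensorProduct.mk_apply] using h2
    · rintro _ ⟨h, rfl⟩
      simp only [hkerGen, LinearMap.mem_ker, LinearMap.sub_apply, LinearMap.coe_comp,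
        Function.comp_apply, LinearMap.flip_apply, TensorProduct.mk_apply, sub_eq_zero]
      exact MooreAux.p1 M h
  · -- Part 2 : Hker(d²₀) ⊓ Hker(d²₁) = k·(1 ⊗ 1 ⊗ 1)
    apply le_antisymm
    · intro x hx
      obtain ⟨hx1, hx2⟩ := Submodule.mem_inf.mp hx
      simp only [hkerGen, LinearMap.mem_ker] at hx1 hx2
      replace hx1 : (TensorProduct.map LinearMap.id (d20 M)) (comulX2 M x) =
          x ⊗ₜ[k] (CH.one ⊗ₜ[k] CA.one) := sub_eq_zero.mp hx1
      replace hx2 : (TensorProduct.map LinearMap.id (d21 M)) (comulX2 M x) =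
          x ⊗ₜ[k] (CH.one ⊗ₜ[k] CA.one) := sub_eq_zero.mp hx2
      have hx0 : x = (MooreAux.q2M M x) ⊗ₜ[k] (CH.one ⊗ₜ[k] CA.one) := by
        have h2 := MooreAux.sa M x
        rw [hx1] at h2
        simp only [map_tmul, LinearMap.id_coe, id_eq] at h2
        exact h2.symm
      have hc : comulX2 M x = midMap k (cHX1 M) (CH.comul (MooreAux.q2M M x) ⊗ₜ[k]
          ((CH.one ⊗ₜ[k] CA.one) ⊗ₜ[k] (CH.one ⊗ₜ[k] CA.one))) := by
        conv_lhs => rw [hx0]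
        rw [MooreAux.comulX2_rho, MooreAux.comulX2_rho0]
      have hd : (TensorProduct.map (MooreAux.rhoM M) (MooreAux.nuM M))
          (CH.comul (MooreAux.q2M M x)) = x ⊗ₜ[k] (CH.one ⊗ₜ[k] CA.one) := by
        rw [← MooreAux.sb M (CH.comul (MooreAux.q2M M x)), ← hc]
        exact hx2
      have hfin := congrArg (MooreAux.f5M M) hd
      rw [MooreAux.sbb, CH.counit_left, MooreAux.f5rhs] at hfin
      simp only [MooreAux.nuM, LinearMap.flip_apply, TensorProduct.mk_apply] at hfin
      have hj := congrArg
        (TensorProduct.map LinearMap.id ((TensorProduct.mk k H A) CH.one)) hfin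
      simp only [map_tmul, map_smul, LinearMap.id_coe, id_eq,
        TensorProduct.mk_apply] at hj
      rw [Submodule.mem_span_singleton]
      refine ⟨MooreAux.epsX2 M x, ?_⟩
      rw [← hj]
      exact hx0.symm
    · rw [Submodule.span_le, Set.singleton_subset_iff, SetLike.mem_coe,
        Submodule.mem_inf]
      constructor
      · simp only [hkerGen, LinearMap.mem_ker]
        refine sub_eq_zero.mpr (?_ :
          (TensorProduct.map LinearMap.id (d20 M))
            (comulX2 M (CH.one ⊗ₜ[k] (CH.one ⊗ₜ[k] CA.one))) =
          (CH.one ⊗ₜ[k] (CH.one ⊗ₜ[k] CA.one)) ⊗ₜ[k] (CH.one ⊗ₜ[k] CA.one))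
        rw [MooreAux.comulX2_rho, CH.comul_one]
        simp only [map_tmul, MooreAux.rhoM, LinearMap.flip_apply, TensorProduct.mk_apply,
          LinearMap.id_coe, id_eq, d20, LinearMap.coe_comp, LinearEquiv.coe_coe,
          Function.comp_apply, lid_tmul, CH.counit_one, one_smul]
      · simp only [hkerGen, LinearMap.mem_ker]
        refine sub_eq_zero.mpr (?_ :
          (TensorProduct.map LinearMap.id (d21 M))
            (comulX2 M (CH.one ⊗ₜ[k] (CH.one ⊗ₜ[k] CA.one))) =
          (CH.one ⊗ₜ[k] (CH.one ⊗ₜ[k] CA.one)) ⊗ₜ[k] (CH.one ⊗ₜ[k] CA.one))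
        rw [MooreAux.comulX2_rho, CH.comul_one]
        simp only [map_tmul, MooreAux.rhoM, LinearMap.flip_apply, TensorProduct.mk_apply,
          LinearMap.id_coe, id_eq, d21, LinearMap.coe_comp, LinearEquiv.coe_coe,
          Function.comp_apply, assoc_symm_tmul, CH.mul_one']


end Statements

end ColorHopfPaper
end
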